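/- arXiv:2001.06998 — 5 statements merged into one kernel-verified Lean document; each statement's English description precedes it below -/
import Mathlib

section
/- Under Assumptions A and B, any local minimizer of the problem (P) is a stationary point of (P). -/
open Set Filter Topology Metric Bornology RealInnerProductSpace
open scoped Classical

noncomputable section

abbrev Euc (n : ℕ) : Type := EuclideanSpace ℝ (Fin n)

/-- Convex subdifferential of a real-valued function on an inner product space. -/
def ConvexSubdiff {H : Type*} [NormedAddCommGroup H] [InnerProductSpace ℝ H]
    (P : H → ℝ) (x : H) : Set H :=
  {ζ | ∀ y, ⟪ζ, y - x⟫ ≤ P y - P x}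

/-- Regular (Fréchet) subdifferential of an extended-real-valued function. -/
def RegularSubdiff {H : Type*} [NormedAddCommGroup H] [InnerProductSpace ℝ H]
    (h : H → EReal) (x : H) : Set H :=
  {ζ | h x ≠ ⊤ ∧ h x ≠ ⊥ ∧ ∀ ε : ℝ, 0 < ε →
    ∀ᶠ z in 𝓝 x,
      (((h x).toReal + ⟪ζ, z - x⟫ - ε * ‖z - x‖ : ℝ) : EReal) ≤ h z}

/-- Limiting (Mordukhovich) subdifferential. -/
def LimSubdiff {H : Type*} [NormedAddCommGroup H] [InnerProductSpace ℝ H]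
    (h : H → EReal) (x : H) : Set H :=
  {ζ | ∃ xs ζs : ℕ → H, (∀ k, ζs k ∈ RegularSubdiff h (xs k)) ∧
    Tendsto xs atTop (𝓝 x) ∧ Tendsto (fun k => h (xs k)) atTop (𝓝 (h x)) ∧
    Tendsto ζs atTop (𝓝 ζ)}

/-- The Kurdyka–Łojasiewicz property with exponent `α` at a point. -/
def KLExpAt {H : Type*} [NormedAddCommGroup H] [InnerProductSpace ℝ H]
    (h : H → EReal) (α : ℝ) (xhat : H) : Prop :=
  ∃ a₀ : ℝ, 0 < a₀ ∧ ∃ a : ℝ, 0 < a ∧ ∃ V ∈ 𝓝 xhat, ∀ x ∈ V,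
    h xhat < h x → h x < h xhat + (a : EReal) →
    1 ≤ a₀ * (1 - α) * ((h x).toReal - (h xhat).toReal) ^ (-α) *
        infDist 0 (LimSubdiff h x)

/-- The general Kurdyka–Łojasiewicz property at a point. -/
def KLAt {H : Type*} [NormedAddCommGroup H] [InnerProductSpace ℝ H]
    (h : H → EReal) (xhat : H) : Prop :=
  ∃ a : ℝ, 0 < a ∧ ∃ V ∈ 𝓝 xhat, ∃ φ φ' : ℝ → ℝ,
    φ 0 = 0 ∧ ContinuousOn φ (Ico 0 a) ∧ ConcaveOn ℝ (Ico 0 a) φ ∧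
    (∀ s ∈ Ioo 0 a, HasDerivAt φ (φ' s) s ∧ 0 < φ' s) ∧
    ∀ x ∈ V, h xhat < h x → h x < h xhat + (a : EReal) →
      1 ≤ φ' ((h x).toReal - (h xhat).toReal) * infDist 0 (LimSubdiff h x)

/-- The extended objective of problem (P). -/
def Fobj {n m : ℕ} (f P1 P2 : Euc n → ℝ) (g : Fin m → Euc n → ℝ) (x : Euc n) : EReal :=
  if ∀ i, g i x ≤ 0 then ((f x + P1 x - P2 x : ℝ) : EReal) else ⊤

/-- The moving balls constraint functions. -/
def barG {n m : ℕ} (g : Fin m → Euc n → ℝ) (g' : Fin m → Euc n → Euc n)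
    (x y : Euc n) (w : EuclideanSpace ℝ (Fin m)) (i : Fin m) : ℝ :=
  g i y + ⟪g' i y, x - y⟫ + w i / 2 * ‖x - y‖ ^ 2

/-- The space `ℝⁿ × ℝⁿ × ℝᵐ` with the (L²) Euclidean inner product. -/
abbrev PS (n m : ℕ) : Type :=
  WithLp 2 (Euc n × WithLp 2 (Euc n × EuclideanSpace ℝ (Fin m)))

/-- The potential function `bar F`. -/
def barF {n m : ℕ} (f P1 P2 : Euc n → ℝ) (g : Fin m → Euc n → ℝ)
    (g' : Fin m → Euc n → Euc n)
    (p : PS n m) : EReal :=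
  if ∀ i, barG g g' p.ofLp.1 p.ofLp.2.ofLp.1 p.ofLp.2.ofLp.2 i ≤ 0 then
    ((f p.ofLp.1 + P1 p.ofLp.1 - P2 p.ofLp.1 : ℝ) : EReal) else ⊤

/-- Stationary points of problem (P). -/
def IsStationaryPt {n m : ℕ} (f P1 P2 : Euc n → ℝ) (f' : Euc n → Euc n)
    (g : Fin m → Euc n → ℝ) (g' : Fin m → Euc n → Euc n) (x : Euc n) : Prop :=
  (∀ i, g i x ≤ 0) ∧ ∃ lam : Fin m → ℝ, (∀ i, 0 ≤ lam i) ∧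
    (∀ i, lam i * g i x = 0) ∧
    ∃ u ∈ ConvexSubdiff P1 x, ∃ v ∈ ConvexSubdiff P2 x,
      f' x + u - v + ∑ i, lam i • g' i x = 0

/-- Assumptions A (smoothness, Lipschitz gradients, level-boundedness) and B (MFCQ). -/
def AssumptionAB {n m : ℕ} (f P1 P2 : Euc n → ℝ) (f' : Euc n → Euc n)
    (g : Fin m → Euc n → ℝ) (g' : Fin m → Euc n → Euc n)
    (Lf : ℝ) (Lg : Fin m → ℝ) : Prop :=
  (∀ x, HasGradientAt f (f' x) x) ∧ LipschitzWith Lf.toNNReal f' ∧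
  ConvexOn ℝ univ P1 ∧ Continuous P1 ∧ ConvexOn ℝ univ P2 ∧ Continuous P2 ∧
  (∀ i x, HasGradientAt (g i) (g' i x) x) ∧
  (∀ i, LipschitzWith (Lg i).toNNReal (g' i)) ∧
  {x : Euc n | ∀ i, g i x ≤ 0}.Nonempty ∧
  (∀ σ : ℝ, IsBounded {x | Fobj f P1 P2 g x ≤ (σ : EReal)}) ∧
  (∀ x : Euc n, (∀ i, g i x ≤ 0) → ∃ d, ∀ i, g i x = 0 → ⟪g' i x, d⟫ < 0)

/-- The sequences generated by the SCP_ls algorithm. -/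
structure SCPlsSeq {n m : ℕ} (f P1 P2 : Euc n → ℝ) (f' : Euc n → Euc n)
    (g : Fin m → Euc n → ℝ) (g' : Fin m → Euc n → Euc n)
    (c Llo : ℝ) (x ξ : ℕ → Euc n) (Lfs : ℕ → ℝ)
    (Lgs : ℕ → EuclideanSpace ℝ (Fin m)) : Prop where
  feas0 : ∀ i, g i (x 0) ≤ 0
  subgrad : ∀ t, ξ t ∈ ConvexSubdiff P2 (x t)
  Lf_lb : ∀ t, Llo ≤ Lfs t
  Lg_lb : ∀ t i, Llo ≤ Lgs t i
  bdd : ∃ M : ℝ, ∀ t, Lfs t ≤ M ∧ ∀ i, Lgs t i ≤ M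
  feas_sub : ∀ t i, barG g g' (x (t + 1)) (x t) (Lgs t) i ≤ 0
  min : ∀ t z, (∀ i, barG g g' z (x t) (Lgs t) i ≤ 0) →
    ⟪f' (x t) - ξ t, x (t + 1) - x t⟫ + Lfs t / 2 * ‖x (t + 1) - x t‖ ^ 2
        + P1 (x (t + 1))
      ≤ ⟪f' (x t) - ξ t, z - x t⟫ + Lfs t / 2 * ‖z - x t‖ ^ 2 + P1 z
  uniq : ∀ t z, (∀ i, barG g g' z (x t) (Lgs t) i ≤ 0) →
    ⟪f' (x t) - ξ t, z - x t⟫ + Lfs t / 2 * ‖z - x t‖ ^ 2 + P1 z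
      ≤ ⟪f' (x t) - ξ t, x (t + 1) - x t⟫ + Lfs t / 2 * ‖x (t + 1) - x t‖ ^ 2
        + P1 (x (t + 1)) → z = x (t + 1)
  feas : ∀ t i, g i (x (t + 1)) ≤ 0
  descent : ∀ t, f (x (t + 1)) + P1 (x (t + 1)) - P2 (x (t + 1)) ≤
    f (x t) + P1 (x t) - P2 (x t) - c / 2 * ‖x (t + 1) - x t‖ ^ 2

/-- Cluster points of a sequence (limits of subsequences). -/
def seqClusterPts {X : Type*} [TopologicalSpace X] (u : ℕ → X) : Set X :=
  {p | ∃ φ : ℕ → ℕ, StrictMono φ ∧ Tendsto (u ∘ φ) atTop (𝓝 p)}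


/-!
Fix a subgradient `v` of `P₂` at `x̂`. On the feasible set, `F ≤ f + P₁ - P₂(x̂) - ⟪v, · - x̂⟫`, with
equality at `x̂`. A direction `d` that strictly decreases every active constraint keeps `x̂ + t d`
feasible for small `t > 0`, and the one-sided derivative of this majorant along `d` (with `P₁`
bounded by its chord) gives `⟪v - ∇f(x̂), d⟫ ≤ P₁(x̂ + d) - P₁(x̂)`. So `d = 0` minimizes the convex
function `⟪∇f(x̂) - v, d⟫ + P₁(x̂ + d)` subject to the strict linearized constraints
`gᵢ(x̂) + ⟪∇gᵢ(x̂), d⟫ < 0`, which have a Slater point by MFCQ. The convex Lagrange multiplier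
theorem (a separation argument in `ℝ^{1+m}`) yields `λ ≥ 0` with `λᵢ gᵢ(x̂) = 0`, and its inequality
at `d = y - x̂` says `v - ∇f(x̂) - ∑ λᵢ ∇gᵢ(x̂) ∈ ∂P₁(x̂)`.
-/

lemma le_of_forall_pos_add_mul_lt {a b u : ℝ} (h : ∀ ε : ℝ, 0 < ε → a + ε * b < u) : a ≤ u := by
  have hlim : Tendsto (fun ε : ℝ => a + ε * b) (𝓝[>] 0) (𝓝 a) := by
    have hc : Continuous fun ε : ℝ => a + ε * b := by fun_prop
    simpa using (hc.tendsto 0).mono_left nhdsWithin_le_nhds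
  exact le_of_tendsto hlim (eventually_nhdsWithin_of_forall fun ε hε => (h ε hε).le)

lemma nonpos_of_forall_pos_add_mul_lt {a b u : ℝ} (h : ∀ M : ℝ, 0 < M → a + M * b < u) :
    b ≤ 0 := by
  by_contra! hb
  have := h ((|u - a| + 1) / b) (by positivity)
  rw [div_mul_cancel₀ _ hb.ne'] at this
  linarith [le_abs_self (u - a)]

theorem exists_strongDual_separating_of_convexOn {E κ : Type*} [AddCommGroup E] [Module ℝ E]
    [Finite κ] {F : κ → E → ℝ} (hF : ∀ o, ConvexOn ℝ univ (F o))
    (hinc : ∀ y, ∃ o, 0 ≤ F o y) :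
    ∃ (φ : StrongDual ℝ (κ → ℝ)) (u : ℝ),
      (∀ p, (∀ o, p o < 0) → φ p < u) ∧ ∀ y, u ≤ φ fun o => F o y := by
  set S : Set (κ → ℝ) := {p | ∃ y, ∀ o, F o y ≤ p o}
  have hSconv : Convex ℝ S := by
    rintro p ⟨y, hy⟩ p' ⟨y', hy'⟩ a b ha hb hab
    refine ⟨a • y + b • y', fun o => ?_⟩
    calc F o (a • y + b • y') ≤ a * F o y + b * F o y' := (hF o).2 trivial trivial ha hb hab
      _ ≤ a * p o + b * p' o := by gcongr; exacts [hy o, hy' o]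
  have hdisj : Disjoint (univ.pi fun _ => Iio 0) S := by
    refine Set.disjoint_left.2 fun p hp ⟨y, hy⟩ => ?_
    obtain ⟨o, ho⟩ := hinc y
    exact absurd ((ho.trans (hy o)).trans_lt (hp o trivial)) (lt_irrefl 0)
  obtain ⟨φ, u, hφT, hφS⟩ := geometric_hahn_banach_open (convex_pi fun _ _ => convex_Iio 0)
    (isOpen_set_pi finite_univ fun _ _ => isOpen_Iio) hSconv hdisj
  exact ⟨φ, u, fun p hp => hφT p fun o _ => hp o, fun y => hφS _ ⟨y, fun o => le_rfl⟩⟩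

/-- The Fan–Glicksberg–Hoffman theorem of the alternative. -/
theorem exists_nonneg_weights_of_convexOn {E κ : Type*} [AddCommGroup E] [Module ℝ E]
    [Fintype κ] {F : κ → E → ℝ} (hF : ∀ o, ConvexOn ℝ univ (F o))
    (hinc : ∀ y, ∃ o, 0 ≤ F o y) :
    ∃ w : κ → ℝ, 0 ≤ w ∧ w ≠ 0 ∧ ∀ y, 0 ≤ ∑ o, w o * F o y := by
  classical
  obtain ⟨φ, u, hφT, hφS⟩ := exists_strongDual_separating_of_convexOn hF hinc
  set e : κ → κ → ℝ := fun o j => if o = j then 1 else 0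
  set w : κ → ℝ := fun o => φ (e o)
  have hφ : ∀ p, φ p = ∑ o, w o * p o := fun p => by
    simpa [mul_comm] using φ.toLinearMap.pi_apply_eq_sum_univ p
  have hu : 0 ≤ u := by
    refine le_of_forall_pos_add_mul_lt (b := -φ 1) fun ε hε => ?_
    have := hφT (-ε • 1) fun o => by simp [hε]
    simp only [map_smul, smul_eq_mul] at this
    linarith
  refine ⟨w, fun o => ?_, fun hw => ?_, fun y => ?_⟩
  · refine neg_nonpos.1 (nonpos_of_forall_pos_add_mul_lt (a := -φ 1) (u := u) fun M hM => ?_)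
    have := hφT (-(1 + M • e o)) fun j => by
      simp only [Pi.neg_apply, Pi.add_apply, Pi.one_apply, Pi.smul_apply, e, smul_eq_mul]
      split_ifs <;> linarith
    simp only [map_neg, map_add, map_smul, smul_eq_mul] at this
    linarith
  · have hφ0 : ∀ p, φ p = 0 := fun p => by simp [hφ p, hw]
    have := hφS 0
    have := hφT (-1) fun o => by simp
    simp only [hφ0] at *
    linarith
  · rw [← hφ]
    exact hu.trans (hφS y)

theorem ConvexOn.exists_lagrange_multipliers {E ι : Type*} [AddCommGroup E] [Module ℝ E]
    [Fintype ι] {c : E → ℝ} {h : ι → E → ℝ} (hc : ConvexOn ℝ univ c)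
    (hh : ∀ i, ConvexOn ℝ univ (h i)) {z : E} (hz : ∀ i, h i z < 0) {x : E}
    (hx : ∀ i, h i x ≤ 0) (hmin : ∀ y, (∀ i, h i y < 0) → c x ≤ c y) :
    ∃ μ : ι → ℝ, 0 ≤ μ ∧ (∀ i, μ i * h i x = 0) ∧ ∀ y, c x ≤ c y + ∑ i, μ i * h i y := by
  let F : Option ι → E → ℝ := fun o => o.elim (fun y => c y - c x) h
  have hF : ∀ o, ConvexOn ℝ univ (F o) := by
    rintro (_ | i)
    exacts [hc.sub (concaveOn_const _ convex_univ), hh i]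
  have hinc : ∀ y, ∃ o, 0 ≤ F o y := fun y => by
    by_contra! hneg
    have hlt : c y - c x < 0 := hneg none
    exact (hmin y fun i => hneg (some i)).not_gt (by linarith)
  obtain ⟨w, hw0, hw, hwF⟩ := exists_nonneg_weights_of_convexOn hF hinc
  simp only [Fintype.sum_option] at hwF
  have hpos : 0 < w none := by
    refine (hw0 none).lt_of_ne fun h0 => hw ?_
    have hterm : ∀ i ∈ Finset.univ, w (some i) * h i z ≤ 0 := fun i _ =>
      mul_nonpos_of_nonneg_of_nonpos (hw0 _) (hz i).le
    have hsum := le_antisymm (Finset.sum_nonpos hterm) (by simpa [F, ← h0] using hwF z)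
    rw [Finset.sum_eq_zero_iff_of_nonpos hterm] at hsum
    funext o
    rcases o with _ | i
    exacts [h0.symm, (mul_eq_zero.1 (hsum i (Finset.mem_univ _))).resolve_right (hz i).ne]
  have hdual : ∀ y, c x ≤ c y + ∑ i, w (some i) / w none * h i y := fun y => by
    have hy := div_nonneg (hwF y) hpos.le
    rw [add_div, mul_div_cancel_left₀ _ hpos.ne', Finset.sum_div] at hy
    simp only [F, Option.elim, div_mul_eq_mul_div] at hy ⊢
    linarith
  refine ⟨fun i => w (some i) / w none, fun i => div_nonneg (hw0 _) hpos.le, ?_, hdual⟩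
  have hterm : ∀ i ∈ Finset.univ, w (some i) / w none * h i x ≤ 0 := fun i _ =>
    mul_nonpos_of_nonneg_of_nonpos (div_nonneg (hw0 _) hpos.le) (hx i)
  have hsum := le_antisymm (Finset.sum_nonpos hterm) (by linarith [hdual x])
  exact fun i => (Finset.sum_eq_zero_iff_of_nonpos hterm).1 hsum i (Finset.mem_univ i)

theorem ConvexOn.exists_strongDual_le_sub {E : Type*} [TopologicalSpace E] [AddCommGroup E]
    [IsTopologicalAddGroup E] [Module ℝ E] [ContinuousSMul ℝ E] {P : E → ℝ}
    (hP : ConvexOn ℝ univ P) (hPc : Continuous P) (x : E) :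
    ∃ ℓ : StrongDual ℝ E, ∀ y, ℓ (y - x) ≤ P y - P x := by
  have hconv : ConvexOn ℝ univ fun p : E × ℝ => P p.1 - p.2 :=
    (hP.comp_linearMap (LinearMap.fst ℝ E ℝ)).sub ((LinearMap.snd ℝ E ℝ).concaveOn convex_univ)
  set S : Set (E × ℝ) := {p ∈ univ | P p.1 - p.2 < 0}
  have hSopen : IsOpen S := by
    simp only [S, mem_univ, true_and]
    exact isOpen_lt (by fun_prop) continuous_const
  obtain ⟨φ, hφ⟩ := geometric_hahn_banach_open_point (hconv.convex_lt 0) hSopen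
    (x := (x, P x)) (by simp)
  set β := φ (0, 1)
  have hsplit : ∀ y r, φ (y, r) = φ (y, 0) + r * β := fun y r => by
    rw [← smul_eq_mul, ← map_smul, ← map_add]
    simp
  have hβ : β < 0 := by
    have := hφ (x, P x + 1) (by simp)
    rw [hsplit x (P x + 1), hsplit x (P x)] at this
    linarith
  have hkey : ∀ y, φ (y, 0) + P y * β ≤ φ (x, 0) + P x * β := fun y =>
    le_of_forall_pos_add_mul_lt (b := β) fun ε hε => by
      have := hφ (y, P y + ε) (by simp [hε])
      rw [hsplit y, hsplit x (P x)] at this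
      linarith
  refine ⟨(-β)⁻¹ • φ.comp (ContinuousLinearMap.inl ℝ E ℝ), fun y => ?_⟩
  have hφyx : φ (y - x, 0) = φ (y, 0) - φ (x, 0) := by
    rw [← map_sub, Prod.mk_sub_mk, sub_zero]
  change (-β)⁻¹ * φ (y - x, 0) ≤ P y - P x
  rw [hφyx, inv_mul_le_iff₀ (neg_pos.2 hβ)]
  nlinarith [hkey y]

theorem ConvexOn.exists_mem_convexSubdiff {H : Type*} [NormedAddCommGroup H]
    [InnerProductSpace ℝ H] [CompleteSpace H] {P : H → ℝ} (hP : ConvexOn ℝ univ P)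
    (hPc : Continuous P) (x : H) : ∃ v, v ∈ ConvexSubdiff P x := by
  obtain ⟨ℓ, hℓ⟩ := hP.exists_strongDual_le_sub hPc x
  exact ⟨(InnerProductSpace.toDual ℝ H).symm ℓ, fun y => by
    rw [InnerProductSpace.toDual_symm_apply]; exact hℓ y⟩

lemma HasDerivAt.nonneg_of_eventually_le_nhdsGT {φ : ℝ → ℝ} {φ' : ℝ} (hφ : HasDerivAt φ φ' 0)
    (hmin : ∀ᶠ t in 𝓝[>] 0, φ 0 ≤ φ t) : 0 ≤ φ' :=
  ge_of_tendsto hφ.tendsto_slope_zero_right <| by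
    filter_upwards [hmin, self_mem_nhdsWithin] with t ht (htpos : 0 < t)
    simpa using smul_nonneg (inv_nonneg.2 htpos.le) (sub_nonneg.2 ht)

lemma HasDerivAt.eventually_neg_nhdsGT {φ : ℝ → ℝ} {φ' : ℝ} (hφ : HasDerivAt φ φ' 0)
    (h0 : φ 0 ≤ 0) (hφ' : φ 0 = 0 → φ' < 0) : ∀ᶠ t in 𝓝[>] 0, φ t < 0 := by
  rcases h0.lt_or_eq with hlt | heq
  · exact nhdsWithin_le_nhds (hφ.continuousAt.eventually (gt_mem_nhds hlt))
  · filter_upwards [hφ.tendsto_slope_zero_right.eventually (gt_mem_nhds (hφ' heq)),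
      self_mem_nhdsWithin] with t ht (htpos : 0 < t)
    by_contra! h
    simp only [zero_add, heq, sub_zero, smul_eq_mul] at ht
    exact ht.not_ge (mul_nonneg (inv_nonneg.2 htpos.le) h)

lemma exists_forall_mul_add_neg {ι : Type*} [Finite ι] {a c : ι → ℝ} (ha : ∀ i, a i ≤ 0)
    (hc : ∀ i, a i = 0 → c i < 0) : ∃ t : ℝ, ∀ i, t * c i + a i < 0 :=
  (Filter.eventually_all.2 fun i =>
    ((hasDerivAt_mul_const (c i)).add_const (a i)).eventually_neg_nhdsGT
      (by simpa using ha i) (by simpa using hc i)).exists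

lemma HasGradientAt.hasDerivAt_comp_add_smul {H : Type*} [NormedAddCommGroup H]
    [InnerProductSpace ℝ H] [CompleteSpace H] {f : H → ℝ} {f' x : H}
    (hf : HasGradientAt f f' x) (d : H) :
    HasDerivAt (fun t : ℝ => f (x + t • d)) ⟪f', d⟫ 0 := by
  have hline : HasDerivAt (fun t : ℝ => x + t • d) d 0 := by
    simpa using ((hasDerivAt_id (0 : ℝ)).smul_const d).const_add x
  have hf0 : HasFDerivAt f (InnerProductSpace.toDual ℝ H f') (x + (0 : ℝ) • d) := by
    simpa using hf.hasFDerivAt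
  have := hf0.comp_hasDerivAt 0 hline
  rwa [InnerProductSpace.toDual_apply_apply] at this

lemma ConvexOn.map_add_smul_le {E : Type*} [AddCommGroup E] [Module ℝ E] {P : E → ℝ}
    (hP : ConvexOn ℝ univ P) (x d : E) {t : ℝ} (ht0 : 0 ≤ t) (ht1 : t ≤ 1) :
    P (x + t • d) ≤ P x + t * (P (x + d) - P x) := by
  have := hP.2 (mem_univ x) (mem_univ (x + d)) (sub_nonneg.2 ht1) ht0 (by ring)
  rw [show (1 - t) • x + t • (x + d) = x + t • d by module, smul_eq_mul, smul_eq_mul] at this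
  linarith

section Problem

variable {n m : ℕ} {f P1 P2 : Euc n → ℝ} {g : Fin m → Euc n → ℝ}

lemma Fobj_of_feasible {x : Euc n} (hx : ∀ i, g i x ≤ 0) :
    Fobj f P1 P2 g x = ((f x + P1 x - P2 x : ℝ) : EReal) :=
  if_pos hx

theorem inner_sub_le_of_isLocalMin_Fobj {a v xhat : Euc n} {b : Fin m → Euc n}
    (hf : HasGradientAt f a xhat) (hP1 : ConvexOn ℝ univ P1) (hv : v ∈ ConvexSubdiff P2 xhat)
    (hg : ∀ i, HasGradientAt (g i) (b i) xhat) (hfeas : ∀ i, g i xhat ≤ 0)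
    (hmin : IsLocalMin (Fobj f P1 P2 g) xhat) {d : Euc n}
    (hd : ∀ i, g i xhat = 0 → ⟪b i, d⟫ < 0) :
    ⟪v - a, d⟫ ≤ P1 (xhat + d) - P1 xhat := by
  set K := P1 (xhat + d) - P1 xhat - ⟪v, d⟫
  have hφ : HasDerivAt (fun t : ℝ => f (xhat + t • d) + t * K) (⟪a, d⟫ + K) 0 :=
    (hf.hasDerivAt_comp_add_smul d).add (hasDerivAt_mul_const K)
  have hray : Tendsto (fun t : ℝ => xhat + t • d) (𝓝[>] 0) (𝓝 xhat) := by
    have hc : Continuous fun t : ℝ => xhat + t • d := by fun_prop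
    simpa using (hc.tendsto 0).mono_left nhdsWithin_le_nhds
  have hfeas_ray : ∀ᶠ t in 𝓝[>] (0 : ℝ), ∀ i, g i (xhat + t • d) < 0 :=
    Filter.eventually_all.2 fun i => ((hg i).hasDerivAt_comp_add_smul d).eventually_neg_nhdsGT
      (by simpa using hfeas i) (by simpa using hd i)
  have hKnn := hφ.nonneg_of_eventually_le_nhdsGT <| by
    filter_upwards [hray.eventually hmin, hfeas_ray, Ioo_mem_nhdsGT one_pos]
      with t hFt hgt ⟨ht0, ht1⟩
    rw [Fobj_of_feasible hfeas, Fobj_of_feasible fun i => (hgt i).le, EReal.coe_le_coe_iff] at hFt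
    have hP1t := hP1.map_add_smul_le xhat d ht0.le ht1.le
    have hP2t := hv (xhat + t • d)
    rw [add_sub_cancel_left, real_inner_smul_right] at hP2t
    simp only [zero_smul, add_zero, zero_mul]
    nlinarith
  rw [inner_sub_left]
  linarith

theorem isStationaryPt_of_forall_inner_sub_le {f' : Euc n → Euc n} {g' : Fin m → Euc n → Euc n}
    {v xhat : Euc n} (hP1 : ConvexOn ℝ univ P1) (hv : v ∈ ConvexSubdiff P2 xhat)
    (hfeas : ∀ i, g i xhat ≤ 0) (hmfcq : ∃ d, ∀ i, g i xhat = 0 → ⟪g' i xhat, d⟫ < 0)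
    (hdir : ∀ d, (∀ i, g i xhat = 0 → ⟪g' i xhat, d⟫ < 0) →
      ⟪v - f' xhat, d⟫ ≤ P1 (xhat + d) - P1 xhat) :
    IsStationaryPt f P1 P2 f' g g' xhat := by
  obtain ⟨d₀, hd₀⟩ := hmfcq
  obtain ⟨t, ht⟩ := exists_forall_mul_add_neg hfeas hd₀
  have hlin : ∀ w : Euc n, ConvexOn ℝ univ fun y => ⟪w, y⟫ := fun w =>
    (innerₛₗ ℝ w).convexOn convex_univ
  have hP1shift : ConvexOn ℝ univ fun d => P1 (xhat + d) := by
    have := hP1.translate_right xhat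
    rwa [preimage_univ] at this
  obtain ⟨μ, hμ0, hμg, hμ⟩ := ConvexOn.exists_lagrange_multipliers
    (c := fun d => ⟪f' xhat - v, d⟫ + P1 (xhat + d)) (h := fun i d => ⟪g' i xhat, d⟫ + g i xhat)
    ((hlin _).add hP1shift) (fun i => (hlin _).add_const _) (z := t • d₀)
    (fun i => by simpa [real_inner_smul_right] using ht i) (x := 0) (by simpa using hfeas)
    (fun d hd => by
      have := hdir d fun i hi => by simpa [hi] using hd i
      simp only [inner_zero_right, add_zero, zero_add, inner_sub_left] at this ⊢
      linarith)
  refine ⟨hfeas, μ, hμ0, by simpa using hμg, v - f' xhat - ∑ i, μ i • g' i xhat,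
    fun y => ?_, v, hv, by abel⟩
  have := hμ (y - xhat)
  simp only [inner_zero_right, add_zero, zero_add, add_sub_cancel] at this hμg
  simp only [mul_add, hμg, add_zero] at this
  simp only [inner_sub_left, sum_inner, real_inner_smul_left] at this ⊢
  linarith

end Problem

/-- Under Assumptions A and B, any local minimizer of (P) is a
stationary point of (P). -/
theorem stmt0 {n m : ℕ} (f P1 P2 : Euc n → ℝ) (f' : Euc n → Euc n)
    (g : Fin m → Euc n → ℝ) (g' : Fin m → Euc n → Euc n)
    (Lf : ℝ) (Lg : Fin m → ℝ)
    (hAB : AssumptionAB f P1 P2 f' g g' Lf Lg)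
    (xhat : Euc n) (hfeas : ∀ i, g i xhat ≤ 0)
    (hloc : ∃ U ∈ 𝓝 xhat, ∀ x ∈ U, Fobj f P1 P2 g xhat ≤ Fobj f P1 P2 g x) :
    IsStationaryPt f P1 P2 f' g g' xhat := by
  obtain ⟨hf, -, hP1, -, hP2, hP2c, hg, -, -, -, hmfcq⟩ := hAB
  obtain ⟨v, hv⟩ := hP2.exists_mem_convexSubdiff hP2c xhat
  obtain ⟨U, hU, hUmin⟩ := hloc
  have hmin : IsLocalMin (Fobj f P1 P2 g) xhat := Filter.eventually_of_mem hU hUmin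
  exact isStationaryPt_of_forall_inner_sub_le hP1 hv hfeas (hmfcq xhat hfeas) fun d hd =>
    inner_sub_le_of_isLocalMin_Fobj (hf xhat) hP1 hv (fun i => hg i xhat) hfeas hmin hd
end
end

section
/- Under Assumptions A and B, let {xᵗ} and {L_gᵗ} be generated by SCP_ls. Then: (i) the sequence {xᵗ} is bounded; (ii) the sequence {bar F(x^{t+1}, xᵗ, L_gᵗ)} is nonincreasing and converges to some real number bar F*, and bar F(x^{t+1}, xᵗ, L_gᵗ) ≤ bar F(xᵗ, x^{t−1}, L_g^{t−1}) − (c/2)‖x^{t+1} − xᵗ‖² for all t ≥ 1; (iii) Σ_{t=0}^∞ ‖x^{t+1} − xᵗ‖² < ∞, and in particular ‖x^{t+1} − xᵗ‖ → 0. -/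
open Set Filter Topology Metric Bornology RealInnerProductSpace
open scoped Classical

noncomputable section

/-! The line search makes `F = f + P1 - P2` drop by `c/2 ‖xᵗ⁺¹ - xᵗ‖²` at every step, and
`bar F (xᵗ⁺¹, xᵗ, L_gᵗ) = F (xᵗ⁺¹)` because `xᵗ⁺¹` satisfies the moving-ball constraints. The
iterates stay in a level set of `F`, hence are bounded by level-boundedness; the continuous `F` is
then bounded below along them, and telescoping the descent inequality gives the summability. -/

theorem bddBelow_range_comp_of_isBounded {X : Type*} [PseudoMetricSpace X] [ProperSpace X]
    {F : X → ℝ} (hF : Continuous F) {x : ℕ → X} (hx : IsBounded (range x)) :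
    BddBelow (range (F ∘ x)) :=
  range_comp F x ▸ (hx.isCompact_closure.bddBelow_image hF.continuousOn).mono
    (image_mono subset_closure)

theorem summable_of_succ_add_le {u d : ℕ → ℝ} (hd : ∀ t, 0 ≤ d t) (hu : BddBelow (range u))
    (h : ∀ t, u (t + 1) + d t ≤ u t) : Summable d := by
  obtain ⟨B, hB⟩ := hu
  refine summable_of_sum_range_le hd (c := u 0 - B) fun N => ?_
  have htelescope : u N + ∑ i ∈ Finset.range N, d i ≤ u 0 := by
    induction N with
    | zero => simp
    | succ k ih => rw [Finset.sum_range_succ]; linarith [h k]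
  linarith [hB ⟨N, rfl⟩]

theorem tendsto_norm_zero_of_summable_sq {E : Type*} [SeminormedAddCommGroup E] {v : ℕ → E}
    (hv : Summable fun t => ‖v t‖ ^ 2) : Tendsto (fun t => ‖v t‖) atTop (𝓝 0) := by
  simpa [Real.sqrt_sq (norm_nonneg _)] using hv.tendsto_atTop_zero.sqrt

namespace SCPlsSeq

variable {n m : ℕ} {f P1 P2 : Euc n → ℝ} {f' : Euc n → Euc n} {g : Fin m → Euc n → ℝ}
  {g' : Fin m → Euc n → Euc n} {c Llo : ℝ} {x ξ : ℕ → Euc n} {Lfs : ℕ → ℝ}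
  {Lgs : ℕ → EuclideanSpace ℝ (Fin m)}

theorem feasible (hseq : SCPlsSeq f P1 P2 f' g g' c Llo x ξ Lfs Lgs) :
    ∀ t i, g i (x t) ≤ 0
  | 0 => hseq.feas0
  | t + 1 => hseq.feas t

theorem objective_antitone (hseq : SCPlsSeq f P1 P2 f' g g' c Llo x ξ Lfs Lgs) (hc : 0 ≤ c) :
    Antitone fun t => f (x t) + P1 (x t) - P2 (x t) :=
  antitone_nat_of_succ_le fun t => by
    nlinarith [hseq.descent t, sq_nonneg ‖x (t + 1) - x t‖]

theorem fobj_eq (hseq : SCPlsSeq f P1 P2 f' g g' c Llo x ξ Lfs Lgs) (t : ℕ) :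
    Fobj f P1 P2 g (x t) = ((f (x t) + P1 (x t) - P2 (x t) : ℝ) : EReal) :=
  if_pos (hseq.feasible t)

theorem barF_eq (hseq : SCPlsSeq f P1 P2 f' g g' c Llo x ξ Lfs Lgs) (t : ℕ) :
    barF f P1 P2 g g' (WithLp.toLp 2 (x (t + 1), WithLp.toLp 2 (x t, Lgs t))) =
      ((f (x (t + 1)) + P1 (x (t + 1)) - P2 (x (t + 1)) : ℝ) : EReal) :=
  if_pos (hseq.feas_sub t)

theorem isBounded_range (hseq : SCPlsSeq f P1 P2 f' g g' c Llo x ξ Lfs Lgs) (hc : 0 ≤ c)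
    (hlevel : ∀ σ : ℝ, IsBounded {z | Fobj f P1 P2 g z ≤ (σ : EReal)}) :
    IsBounded (range x) := by
  refine (hlevel (f (x 0) + P1 (x 0) - P2 (x 0))).subset ?_
  rintro - ⟨t, rfl⟩
  change Fobj f P1 P2 g (x t) ≤ _
  rw [hseq.fobj_eq]
  exact EReal.coe_le_coe (hseq.objective_antitone hc t.zero_le)

theorem summable_sq_norm_sub (hseq : SCPlsSeq f P1 P2 f' g g' c Llo x ξ Lfs Lgs) (hc : 0 < c)
    (hbelow : BddBelow (range fun t => f (x t) + P1 (x t) - P2 (x t))) :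
    Summable fun t => ‖x (t + 1) - x t‖ ^ 2 := by
  refine (summable_mul_left_iff (by positivity : c / 2 ≠ 0)).1 ?_
  exact summable_of_succ_add_le (fun t => by positivity) hbelow
    fun t => by linarith [hseq.descent t]

end SCPlsSeq

theorem stmt4_general {n m : ℕ} (f P1 P2 : Euc n → ℝ) (f' : Euc n → Euc n)
    (g : Fin m → Euc n → ℝ) (g' : Fin m → Euc n → Euc n)
    (Lf : ℝ) (Lg : Fin m → ℝ)
    (hAB : AssumptionAB f P1 P2 f' g g' Lf Lg)
    (c Llo : ℝ) (hc : 0 < c)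
    (x ξ : ℕ → Euc n) (Lfs : ℕ → ℝ) (Lgs : ℕ → EuclideanSpace ℝ (Fin m))
    (hseq : SCPlsSeq f P1 P2 f' g g' c Llo x ξ Lfs Lgs) :
    IsBounded (Set.range x) ∧
    (∃ Fstar : ℝ,
      Antitone (fun t => barF f P1 P2 g g' (WithLp.toLp 2 (x (t + 1), WithLp.toLp 2 (x t, Lgs t)))) ∧
      Tendsto (fun t => barF f P1 P2 g g' (WithLp.toLp 2 (x (t + 1), WithLp.toLp 2 (x t, Lgs t)))) atTop
        (𝓝 ((Fstar : ℝ) : EReal)) ∧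
      ∀ t : ℕ, 1 ≤ t →
        barF f P1 P2 g g' (WithLp.toLp 2 (x (t + 1), WithLp.toLp 2 (x t, Lgs t)))
            + ((c / 2 * ‖x (t + 1) - x t‖ ^ 2 : ℝ) : EReal)
          ≤ barF f P1 P2 g g' (WithLp.toLp 2 (x t, WithLp.toLp 2 (x (t - 1), Lgs (t - 1))))) ∧
    (Summable fun t => ‖x (t + 1) - x t‖ ^ 2) ∧
    Tendsto (fun t => ‖x (t + 1) - x t‖) atTop (𝓝 0) := by
  obtain ⟨hf, -, -, hP1, -, hP2, -, -, -, hlevel, -⟩ := hAB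
  have hF : Continuous fun z => f z + P1 z - P2 z :=
    ((continuous_iff_continuousAt.2 fun z => (hf z).continuousAt).add hP1).sub hP2
  have hbdd := hseq.isBounded_range hc.le hlevel
  have hanti := hseq.objective_antitone hc.le
  have hbelow := bddBelow_range_comp_of_isBounded hF hbdd
  have hsum := hseq.summable_sq_norm_sub hc hbelow
  have hanti_succ := hanti.comp_monotone (add_left_mono (a := 1))
  refine ⟨hbdd, ⟨⨅ t, f (x (t + 1)) + P1 (x (t + 1)) - P2 (x (t + 1)), ?_, ?_, ?_⟩, hsum,
    tendsto_norm_zero_of_summable_sq hsum⟩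
  · simp_rw [hseq.barF_eq]
    exact fun s t hst => EReal.coe_le_coe (hanti_succ hst)
  · simp_rw [hseq.barF_eq]
    refine EReal.tendsto_coe.2 (tendsto_atTop_ciInf hanti_succ (hbelow.mono ?_))
    rintro - ⟨t, rfl⟩
    exact ⟨t + 1, rfl⟩
  · rintro (_ | t) ht
    · omega
    rw [Nat.add_sub_cancel, hseq.barF_eq, hseq.barF_eq, ← EReal.coe_add]
    exact EReal.coe_le_coe (by linarith [hseq.descent (t + 1)])

/-- basic properties of the sequence generated by SCP_ls: boundedness,
monotone decrease and convergence of the potential values, and square-summability of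
the successive differences. -/
theorem stmt4 {n m : ℕ} (f P1 P2 : Euc n → ℝ) (f' : Euc n → Euc n)
    (g : Fin m → Euc n → ℝ) (g' : Fin m → Euc n → Euc n)
    (Lf : ℝ) (Lg : Fin m → ℝ)
    (hAB : AssumptionAB f P1 P2 f' g g' Lf Lg)
    (c Llo : ℝ) (hc : 0 < c) (hLlo : 0 < Llo)
    (x ξ : ℕ → Euc n) (Lfs : ℕ → ℝ) (Lgs : ℕ → EuclideanSpace ℝ (Fin m))
    (hseq : SCPlsSeq f P1 P2 f' g g' c Llo x ξ Lfs Lgs) :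
    IsBounded (Set.range x) ∧
    (∃ Fstar : ℝ,
      Antitone (fun t => barF f P1 P2 g g' (WithLp.toLp 2 (x (t + 1), WithLp.toLp 2 (x t, Lgs t)))) ∧
      Tendsto (fun t => barF f P1 P2 g g' (WithLp.toLp 2 (x (t + 1), WithLp.toLp 2 (x t, Lgs t)))) atTop
        (𝓝 ((Fstar : ℝ) : EReal)) ∧
      ∀ t : ℕ, 1 ≤ t →
        barF f P1 P2 g g' (WithLp.toLp 2 (x (t + 1), WithLp.toLp 2 (x t, Lgs t)))
            + ((c / 2 * ‖x (t + 1) - x t‖ ^ 2 : ℝ) : EReal)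
          ≤ barF f P1 P2 g g' (WithLp.toLp 2 (x t, WithLp.toLp 2 (x (t - 1), Lgs (t - 1))))) ∧
    (Summable fun t => ‖x (t + 1) - x t‖ ^ 2) ∧
    Tendsto (fun t => ‖x (t + 1) - x t‖) atTop (𝓝 0) :=
  stmt4_general f P1 P2 f' g g' Lf Lg hAB c Llo hc x ξ Lfs Lgs hseq
end
end

section
/- Under Assumptions A and B, let {(xᵗ, L_gᵗ)} be generated by SCP_ls and let Ω denote the set of accumulation points of the sequence {(x^{t+1}, xᵗ, L_gᵗ)}. Then Ω ≠ ∅ and bar F is constant on Ω, equal to bar F* := lim_{t→∞} bar F(x^{t+1}, xᵗ, L_gᵗ). -/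
open Set Filter Topology Metric Bornology RealInnerProductSpace
open scoped Classical

noncomputable section

/-- the set `Ω` of accumulation points of `{(x^{t+1}, x^t, L_g^t)}` is
nonempty and `bar F` is constant on `Ω`, equal to `bar F⋆ = lim_t bar F(x^{t+1}, x^t, L_g^t)`. -/
theorem stmt6 {n m : ℕ} (f P1 P2 : Euc n → ℝ) (f' : Euc n → Euc n)
    (g : Fin m → Euc n → ℝ) (g' : Fin m → Euc n → Euc n)
    (Lf : ℝ) (Lg : Fin m → ℝ)
    (hAB : AssumptionAB f P1 P2 f' g g' Lf Lg)
    (c Llo : ℝ) (hc : 0 < c) (hLlo : 0 < Llo)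
    (x ξ : ℕ → Euc n) (Lfs : ℕ → ℝ) (Lgs : ℕ → EuclideanSpace ℝ (Fin m))
    (hseq : SCPlsSeq f P1 P2 f' g g' c Llo x ξ Lfs Lgs) :
    ∃ Fstar : ℝ,
      Tendsto (fun t => barF f P1 P2 g g' (WithLp.toLp 2 (x (t + 1), WithLp.toLp 2 (x t, Lgs t)))) atTop
        (𝓝 ((Fstar : ℝ) : EReal)) ∧
      (seqClusterPts (fun t => (x (t + 1), x t, Lgs t))).Nonempty ∧
      ∀ p ∈ seqClusterPts (fun t => (x (t + 1), x t, Lgs t)),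
        barF f P1 P2 g g' (WithLp.toLp 2 (p.1, WithLp.toLp 2 p.2)) = ((Fstar : ℝ) : EReal) := by
  classical
  obtain ⟨hf, -, -, hP1c, -, hP2c, hg, hgL, -, hlvl, -⟩ := hAB
  have hfc : Continuous f := continuous_iff_continuousAt.2 fun y => (hf y).continuousAt
  set Fr : Euc n → ℝ := fun y => f y + P1 y - P2 y with hFrdef
  have hFrc : Continuous Fr := (hfc.add hP1c).sub hP2c
  have hfeas : ∀ t i, g i (x t) ≤ 0 := by
    intro t
    cases t with
    | zero => exact hseq.feas0
    | succ t => exact hseq.feas t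
  have hanti : Antitone fun t => Fr (x t) := by
    apply antitone_nat_of_succ_le
    intro t
    have h := hseq.descent t
    have h2 : (0:ℝ) ≤ ‖x (t+1) - x t‖ ^ 2 := sq_nonneg _
    simp only [Fr]
    nlinarith
  set S := {y : Euc n | Fobj f P1 P2 g y ≤ ((Fr (x 0) : ℝ) : EReal)} with hSdef
  have hxS : ∀ t, x t ∈ S := by
    intro t
    simp only [S, Set.mem_setOf_eq, Fobj, if_pos (hfeas t)]
    exact_mod_cast hanti (Nat.zero_le t)
  have hSb : IsBounded S := hlvl _
  have hKc : IsCompact (closure S) := hSb.isCompact_closure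
  have hbdd : BddBelow (Fr '' closure S) := hKc.bddBelow_image hFrc.continuousOn
  obtain ⟨B, hB⟩ := hbdd
  have hBle : ∀ t, B ≤ Fr (x t) := fun t => hB ⟨x t, subset_closure (hxS t), rfl⟩
  have hanti' : Antitone fun t => Fr (x (t + 1)) := fun a b hab => hanti (by omega)
  have hbdd' : BddBelow (Set.range fun t => Fr (x (t + 1))) := by
    refine ⟨B, ?_⟩
    rintro r ⟨t, rfl⟩
    exact hBle (t + 1)
  have h5 : Tendsto (fun t => Fr (x (t + 1))) atTop (𝓝 (⨅ t, Fr (x (t + 1)))) :=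
    tendsto_atTop_ciInf hanti' hbdd'
  set Fstar : ℝ := ⨅ t, Fr (x (t + 1)) with hFstardef
  have hbarF : ∀ t, barF f P1 P2 g g' (WithLp.toLp 2 (x (t + 1), WithLp.toLp 2 (x t, Lgs t)))
      = ((Fr (x (t + 1)) : ℝ) : EReal) := by
    intro t
    exact if_pos (hseq.feas_sub t)
  -- continuous linear equivs
  set e1 := WithLp.prodContinuousLinearEquiv 2 ℝ (Euc n)
      (WithLp 2 (Euc n × EuclideanSpace ℝ (Fin m))) with he1
  set e2 := WithLp.prodContinuousLinearEquiv 2 ℝ (Euc n)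
      (EuclideanSpace ℝ (Fin m)) with he2
  have hpi1 : Continuous fun q : Euc n × Euc n × EuclideanSpace ℝ (Fin m) => q.1 :=
    continuous_fst
  have hpi2 : Continuous fun q : Euc n × Euc n × EuclideanSpace ℝ (Fin m) => q.2.1 :=
    continuous_fst.comp continuous_snd
  have hpi3 : Continuous fun q : Euc n × Euc n × EuclideanSpace ℝ (Fin m) => q.2.2 :=
    continuous_snd.comp continuous_snd
  -- boundedness of the Lgs sequence
  obtain ⟨M, hM⟩ := hseq.bdd
  set C : ℝ := max |Llo| |M| with hCdef
  have habs : ∀ t i, |Lgs t i| ≤ C := by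
    intro t i
    apply abs_le.2
    constructor
    · have h3 : -|Llo| ≤ Llo := neg_abs_le Llo
      have h4 : -C ≤ -|Llo| := neg_le_neg (le_max_left _ _)
      have h5 := hseq.Lg_lb t i
      linarith
    · exact ((hM t).2 i).trans ((le_abs_self M).trans (le_max_right _ _))
  set R : ℝ := Real.sqrt (m * C ^ 2) with hRdef
  have hnormLg : ∀ t, ‖Lgs t‖ ≤ R := by
    intro t
    rw [EuclideanSpace.norm_eq]
    apply Real.sqrt_le_sqrt
    calc ∑ i, ‖Lgs t i‖ ^ 2 ≤ ∑ _i : Fin m, C ^ 2 := by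
          apply Finset.sum_le_sum
          intro i _
          have := habs t i
          have h0 : (0:ℝ) ≤ |Lgs t i| := abs_nonneg _
          calc ‖Lgs t i‖ ^ 2 = |Lgs t i| ^ 2 := by rw [Real.norm_eq_abs]
            _ ≤ C ^ 2 := by nlinarith
      _ = m * C ^ 2 := by simp [Finset.sum_const, mul_comm]
  -- boundedness of the whole sequence
  set u : ℕ → Euc n × Euc n × EuclideanSpace ℝ (Fin m) := fun t => (x (t + 1), x t, Lgs t) with hudef
  set K : Set (Euc n × Euc n × EuclideanSpace ℝ (Fin m)) :=
    closure S ×ˢ (closure S ×ˢ Metric.closedBall 0 R) with hKdef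
  have hKb : IsBounded K :=
    (hSb.closure).prod ((hSb.closure).prod Metric.isBounded_closedBall)
  have huK : ∀ t, u t ∈ K := by
    intro t
    exact ⟨subset_closure (hxS (t + 1)), subset_closure (hxS t),
      mem_closedBall_zero_iff.2 (hnormLg t)⟩
  obtain ⟨p, -, φ, hφ, hup⟩ := tendsto_subseq_of_bounded hKb huK
  refine ⟨Fstar, ?_, ⟨p, φ, hφ, hup⟩, ?_⟩
  · have : Tendsto (fun t => ((Fr (x (t + 1)) : ℝ) : EReal)) atTop (𝓝 ((Fstar : ℝ) : EReal)) :=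
      (continuous_coe_real_ereal.tendsto _).comp h5
    exact (tendsto_congr fun t => hbarF t).2 this
  · rintro p' ⟨ψ, hψ, hp'⟩
    have ha : Tendsto (fun k => x (ψ k + 1)) atTop (𝓝 p'.1) :=
      (hpi1.tendsto p').comp hp'
    have hb : Tendsto (fun k => x (ψ k)) atTop (𝓝 p'.2.1) :=
      (hpi2.tendsto p').comp hp'
    have hw : Tendsto (fun k => Lgs (ψ k)) atTop (𝓝 p'.2.2) :=
      (hpi3.tendsto p').comp hp'
    have hGle : ∀ i, barG g g' p'.1 p'.2.1 p'.2.2 i ≤ 0 := by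
      intro i
      have hgc : Continuous (g i) := continuous_iff_continuousAt.2 fun y => (hg i y).continuousAt
      have hg'c : Continuous (g' i) := (hgL i).continuous
      have hwi : Tendsto (fun k => Lgs (ψ k) i) atTop (𝓝 (p'.2.2 i)) :=
        ((EuclideanSpace.proj i).continuous.tendsto _).comp hw
      have hlim : Tendsto (fun k => barG g g' (x (ψ k + 1)) (x (ψ k)) (Lgs (ψ k)) i)
          atTop (𝓝 (barG g g' p'.1 p'.2.1 p'.2.2 i)) := by
        unfold barG
        refine Filter.Tendsto.add (Filter.Tendsto.add ?_ ?_) ?_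
        · exact (hgc.tendsto _).comp hb
        · exact Filter.Tendsto.inner ((hg'c.tendsto _).comp hb) (ha.sub hb)
        · exact ((hwi.div_const 2).mul (((ha.sub hb).norm).pow 2))
      exact le_of_tendsto hlim (Filter.Eventually.of_forall fun k => hseq.feas_sub (ψ k) i)
    have hFreq : Fr p'.1 = Fstar := by
      have h1 : Tendsto (fun k => Fr (x (ψ k + 1))) atTop (𝓝 (Fr p'.1)) :=
        (hFrc.tendsto _).comp ha
      have h2 : Tendsto (fun k => Fr (x (ψ k + 1))) atTop (𝓝 Fstar) :=
        h5.comp hψ.tendsto_atTop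
      exact tendsto_nhds_unique h1 h2
    have : barF f P1 P2 g g' (WithLp.toLp 2 (p'.1, WithLp.toLp 2 p'.2)) = ((Fr p'.1 : ℝ) : EReal) := if_pos hGle
    rw [this, hFreq]
end
end

section
/- Suppose each g_i is twice continuously differentiable, let (x, y, w) ∈ ℝⁿ × ℝⁿ × ℝᵐ, and assume P₂ is continuously differentiable around x. Then for every λ ∈ N_{−ℝ₊ᵐ}(bar G(x,y,w)) and every u ∈ ∂P₁(x), the vector with block components (∇f(x) − ∇P₂(x) + u + Σᵢ λᵢ[∇gᵢ(y) + wᵢ(x − y)], Σᵢ λᵢ[∇²gᵢ(y)(x − y) − wᵢ(x − y)], (1/2)‖x − y‖² λ) belongs to the limiting subdifferential ∂bar F(x, y, w). -/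
open Set Filter Topology Metric Bornology RealInnerProductSpace
open scoped Classical

noncomputable section

/-! The vector `ζ` is already a regular subgradient of `bar F` at `p = (x, y, w)` itself. On the
feasible set, `bar F` dominates the smooth function `f + (P₁ x + ⟪u, · - x⟫) - P₂ + ∑ λᵢ bar Gᵢ`,
because `u` is a subgradient of `P₁`, `λ ≥ 0` and `bar G ≤ 0`; complementarity makes the two agree
at `p`, and the gradient of the smooth function at `p` is `ζ`. The `y`-block of that gradient is
`∑ λᵢ (∇²gᵢ(y) (x - y) - wᵢ (x - y))` only thanks to the symmetry of `∇²gᵢ(y)`. -/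

theorem RegularSubdiff.subset_limSubdiff {H : Type*} [NormedAddCommGroup H]
    [InnerProductSpace ℝ H] (h : H → EReal) (x : H) :
    RegularSubdiff h x ⊆ LimSubdiff h x := fun ζ hζ =>
  ⟨fun _ => x, fun _ => ζ, fun _ => hζ, tendsto_const_nhds, tendsto_const_nhds,
    tendsto_const_nhds⟩

theorem mem_regularSubdiff_of_hasGradientAt_of_le {H : Type*} [NormedAddCommGroup H]
    [InnerProductSpace ℝ H] [CompleteSpace H] {h : H → EReal} {φ : H → ℝ} {ζ x : H}
    (hφ : HasGradientAt φ ζ x) (hle : ∀ z, (φ z : EReal) ≤ h z) (hx : h x = φ x) :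
    ζ ∈ RegularSubdiff h x := by
  refine ⟨by simp [hx], by simp [hx], fun ε hε => ?_⟩
  filter_upwards [(hasGradientAt_iff_isLittleO.mp hφ).def hε] with z hz
  refine le_trans ?_ (hle z)
  rw [hx, EReal.toReal_coe, EReal.coe_le_coe_iff]
  have hlow := (abs_le.mp (Real.norm_eq_abs _ ▸ hz)).1
  linarith

section Gradient

variable {H : Type*} [NormedAddCommGroup H] [InnerProductSpace ℝ H] [CompleteSpace H]
  {φ ψ : H → ℝ} {a b x : H}

theorem HasGradientAt.add (hφ : HasGradientAt φ a x) (hψ : HasGradientAt ψ b x) :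
    HasGradientAt (fun z => φ z + ψ z) (a + b) x := by
  rw [hasGradientAt_iff_hasFDerivAt, map_add]
  exact hφ.hasFDerivAt.add hψ.hasFDerivAt

theorem HasGradientAt.sub (hφ : HasGradientAt φ a x) (hψ : HasGradientAt ψ b x) :
    HasGradientAt (fun z => φ z - ψ z) (a - b) x := by
  rw [hasGradientAt_iff_hasFDerivAt, map_sub]
  exact hφ.hasFDerivAt.sub hψ.hasFDerivAt

theorem HasGradientAt.sum_mul {ι : Type*} (s : Finset ι) (c : ι → ℝ) {φ : ι → H → ℝ}
    {a : ι → H} (h : ∀ i ∈ s, HasGradientAt (φ i) (a i) x) :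
    HasGradientAt (fun z => ∑ i ∈ s, c i * φ i z) (∑ i ∈ s, c i • a i) x := by
  rw [hasGradientAt_iff_hasFDerivAt, map_sum]
  simp only [map_smul]
  exact HasFDerivAt.fun_sum fun i hi => (h i hi).hasFDerivAt.const_mul (c i)

theorem hasGradientAt_const_add_inner_sub (c : ℝ) (v x₀ : H) :
    HasGradientAt (fun z => c + ⟪v, z - x₀⟫) v x := by
  rw [hasGradientAt_iff_hasFDerivAt]
  refine (((innerSL ℝ v).hasFDerivAt.comp x ((hasFDerivAt_id x).sub_const x₀)).const_add
    c).congr_fderiv ?_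
  ext
  simp

end Gradient

theorem HasGradientAt.comp_fst {E F : Type*} [NormedAddCommGroup E] [InnerProductSpace ℝ E]
    [CompleteSpace E] [NormedAddCommGroup F] [InnerProductSpace ℝ F] [CompleteSpace F]
    {φ : E → ℝ} {a : E} {z : WithLp 2 (E × F)} (hφ : HasGradientAt φ a z.ofLp.1) :
    HasGradientAt (fun z : WithLp 2 (E × F) => φ z.ofLp.1) (WithLp.toLp 2 (a, 0)) z := by
  rw [hasGradientAt_iff_hasFDerivAt]
  refine (hφ.hasFDerivAt.comp z (WithLp.fstL 2 ℝ E F).hasFDerivAt).congr_fderiv ?_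
  ext v
  simp

theorem inner_fderiv_gradient_comm {H : Type*} [NormedAddCommGroup H]
    [InnerProductSpace ℝ H] [CompleteSpace H] {g : H → ℝ} {g' : H → H} {g'' : H →L[ℝ] H} {y : H}
    (hg' : ∀ z, HasGradientAt g (g' z) z) (hg'' : HasFDerivAt g' g'' y) (a b : H) :
    ⟪g'' a, b⟫ = ⟪g'' b, a⟫ := by
  have hg : ∀ z, HasFDerivAt g (innerSL ℝ (g' z)) z := fun z => (hg' z).hasFDerivAt
  exact second_derivative_symmetric hg ((innerSL ℝ).hasFDerivAt.comp y hg'') a b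

theorem hasGradientAt_barG {n m : ℕ} {g : Fin m → Euc n → ℝ} {g' : Fin m → Euc n → Euc n}
    {Hg : Euc n →L[ℝ] Euc n} {x y : Euc n} {w : EuclideanSpace ℝ (Fin m)} {i : Fin m}
    (hg' : ∀ z, HasGradientAt (g i) (g' i z) z) (hg'' : HasFDerivAt (g' i) Hg y) :
    HasGradientAt (fun z : PS n m => barG g g' z.ofLp.1 z.ofLp.2.ofLp.1 z.ofLp.2.ofLp.2 i)
      (WithLp.toLp 2 (g' i y + w i • (x - y), WithLp.toLp 2 (Hg (x - y) - w i • (x - y),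
        EuclideanSpace.single i (2⁻¹ * ‖x - y‖ ^ 2))))
      (WithLp.toLp 2 (x, WithLp.toLp 2 (y, w))) := by
  set p : PS n m := WithLp.toLp 2 (x, WithLp.toLp 2 (y, w))
  have h₁ : HasFDerivAt (fun z : PS n m => z.ofLp.1) (WithLp.fstL 2 ℝ _ _) p :=
    (WithLp.fstL 2 ℝ _ _).hasFDerivAt
  have h₂ : HasFDerivAt (fun z : PS n m => z.ofLp.2.ofLp.1)
      ((WithLp.fstL 2 ℝ _ _).comp (WithLp.sndL 2 ℝ _ _)) p :=
    ((WithLp.fstL 2 ℝ _ _).comp (WithLp.sndL 2 ℝ _ _)).hasFDerivAt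
  have h₃ : HasFDerivAt (fun z : PS n m => z.ofLp.2.ofLp.2 i)
      ((EuclideanSpace.proj i).comp ((WithLp.sndL 2 ℝ _ _).comp (WithLp.sndL 2 ℝ _ _))) p :=
    ((EuclideanSpace.proj i).comp ((WithLp.sndL 2 ℝ _ _).comp (WithLp.sndL 2 ℝ _ _))).hasFDerivAt
  have hd := h₁.sub h₂
  have H := (((hg' y).hasFDerivAt.comp p h₂).add ((hg''.comp p h₂).inner ℝ hd)).add
    ((h₃.mul_const (2⁻¹ : ℝ)).mul hd.norm_sq)
  rw [hasGradientAt_iff_hasFDerivAt]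
  refine (H.congr_fderiv ?_).congr_of_eventuallyEq (.of_forall fun z => ?_)
  · ext v
    have hsymm : ⟪Hg v.snd.fst, x - y⟫ = ⟪Hg (x - y), v.snd.fst⟫ :=
      inner_fderiv_gradient_comm hg' hg'' _ _
    simp [p, hsymm, inner_sub_left, inner_sub_right, inner_add_left, real_inner_smul_left,
      EuclideanSpace.inner_single_left]
    ring
  · simp [barG, div_eq_mul_inv]

section Potential

variable {n m : ℕ} (f P1 P2 : Euc n → ℝ) (g : Fin m → Euc n → ℝ) (g' : Fin m → Euc n → Euc n)
  (x u : Euc n) (lam : EuclideanSpace ℝ (Fin m))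

def linLagrangian (z : PS n m) : ℝ :=
  f z.ofLp.1 + (P1 x + ⟪u, z.ofLp.1 - x⟫) - P2 z.ofLp.1 +
    ∑ i, lam i * barG g g' z.ofLp.1 z.ofLp.2.ofLp.1 z.ofLp.2.ofLp.2 i

variable {f P1 P2 g g' x u lam}

theorem linLagrangian_le_barF (hlam : ∀ i, 0 ≤ lam i) (hu : u ∈ ConvexSubdiff P1 x)
    (z : PS n m) : (linLagrangian f P1 P2 g g' x u lam z : EReal) ≤ barF f P1 P2 g g' z := by
  unfold barF
  split_ifs with hz
  · have hsum : ∑ i, lam i * barG g g' z.ofLp.1 z.ofLp.2.ofLp.1 z.ofLp.2.ofLp.2 i ≤ 0 :=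
      Finset.sum_nonpos fun i _ => mul_nonpos_of_nonneg_of_nonpos (hlam i) (hz i)
    have hP1 := hu z.ofLp.1
    rw [EReal.coe_le_coe_iff, linLagrangian]
    linarith
  · exact le_top

theorem barF_eq_linLagrangian {y : Euc n} {w : EuclideanSpace ℝ (Fin m)}
    (hGle : ∀ i, barG g g' x y w i ≤ 0) (hcompl : ∀ i, lam i * barG g g' x y w i = 0) :
    barF f P1 P2 g g' (WithLp.toLp 2 (x, WithLp.toLp 2 (y, w))) =
      linLagrangian f P1 P2 g g' x u lam (WithLp.toLp 2 (x, WithLp.toLp 2 (y, w))) := by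
  simp [barF, linLagrangian, hGle, hcompl]

theorem hasGradientAt_linLagrangian {f' P2' : Euc n → Euc n}
    {g'' : Fin m → Euc n → (Euc n →L[ℝ] Euc n)} {y : Euc n} {w : EuclideanSpace ℝ (Fin m)}
    (hf : HasGradientAt f (f' x) x) (hP2 : HasGradientAt P2 (P2' x) x)
    (hg' : ∀ i z, HasGradientAt (g i) (g' i z) z) (hg'' : ∀ i, HasFDerivAt (g' i) (g'' i y) y) :
    HasGradientAt (linLagrangian f P1 P2 g g' x u lam)
      (WithLp.toLp 2 (f' x - P2' x + u + ∑ i, lam i • (g' i y + w i • (x - y)),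
        WithLp.toLp 2 (∑ i, lam i • (g'' i y (x - y) - w i • (x - y)),
        (2⁻¹ * ‖x - y‖ ^ 2) • lam)))
      (WithLp.toLp 2 (x, WithLp.toLp 2 (y, w))) := by
  have H := (((hf.add (hasGradientAt_const_add_inner_sub (P1 x) u x)).sub hP2).comp_fst
    (F := WithLp 2 (Euc n × EuclideanSpace ℝ (Fin m)))
    (z := WithLp.toLp 2 (x, WithLp.toLp 2 (y, w)))).add
    (HasGradientAt.sum_mul Finset.univ lam fun i _ => hasGradientAt_barG (w := w) (hg' i) (hg'' i))
  convert H using 1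
  · rfl
  · refine WithLp.ofLp_injective 2 (Prod.ext ?_ (WithLp.ofLp_injective 2 (Prod.ext ?_ ?_)))
    · simp [WithLp.ofLp_sum, Prod.fst_sum, Finset.sum_add_distrib, smul_add]
      abel
    · simp [WithLp.ofLp_sum, Prod.fst_sum, Prod.snd_sum]
    · ext j
      simp [WithLp.ofLp_sum, Prod.snd_sum, Pi.single_apply, mul_comm]

end Potential

theorem stmt7_general {n m : ℕ} (f P1 P2 : Euc n → ℝ) (f' : Euc n → Euc n)
    (g : Fin m → Euc n → ℝ) (g' : Fin m → Euc n → Euc n)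
    (g'' : Fin m → Euc n → (Euc n →L[ℝ] Euc n))
    (hf' : ∀ x, HasGradientAt f (f' x) x)
    (hg' : ∀ i x, HasGradientAt (g i) (g' i x) x)
    (hg'' : ∀ i x, HasFDerivAt (g' i) (g'' i x) x)
    (x y : Euc n) (w : EuclideanSpace ℝ (Fin m))
    (P2' : Euc n → Euc n) (U : Set (Euc n)) (hU : U ∈ 𝓝 x)
    (hP2' : ∀ z ∈ U, HasGradientAt P2 (P2' z) z)
    (lam : EuclideanSpace ℝ (Fin m)) (hlam : ∀ i, 0 ≤ lam i)
    (hGle : ∀ i, barG g g' x y w i ≤ 0)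
    (hcompl : ∀ i, lam i * barG g g' x y w i = 0)
    (u : Euc n) (hu : u ∈ ConvexSubdiff P1 x) :
    (WithLp.toLp 2 (f' x - P2' x + u + ∑ i, lam i • (g' i y + w i • (x - y)),
      WithLp.toLp 2 (∑ i, lam i • (g'' i y (x - y) - w i • (x - y)),
      (2⁻¹ * ‖x - y‖ ^ 2) • lam)) : PS n m)
      ∈ LimSubdiff (barF f P1 P2 g g') (WithLp.toLp 2 (x, WithLp.toLp 2 (y, w))) :=
  RegularSubdiff.subset_limSubdiff _ _ <|
    mem_regularSubdiff_of_hasGradientAt_of_le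
      (hasGradientAt_linLagrangian (hf' x) (hP2' x (mem_of_mem_nhds hU)) hg' fun i => hg'' i y)
      (linLagrangian_le_barF hlam hu) (barF_eq_linLagrangian hGle hcompl)

/-- an explicit element of the limiting subdifferential of `bar F`,
built from a normal-cone multiplier and a subgradient of `P₁`. -/
theorem stmt7 {n m : ℕ} (f P1 P2 : Euc n → ℝ) (f' : Euc n → Euc n)
    (g : Fin m → Euc n → ℝ) (g' : Fin m → Euc n → Euc n)
    (g'' : Fin m → Euc n → (Euc n →L[ℝ] Euc n))
    (hf' : ∀ x, HasGradientAt f (f' x) x)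
    (hP1conv : ConvexOn ℝ univ P1) (hP1cont : Continuous P1)
    (hP2conv : ConvexOn ℝ univ P2) (hP2cont : Continuous P2)
    (hg2 : ∀ i, ContDiff ℝ 2 (g i))
    (hg' : ∀ i x, HasGradientAt (g i) (g' i x) x)
    (hg'' : ∀ i x, HasFDerivAt (g' i) (g'' i x) x)
    (x y : Euc n) (w : EuclideanSpace ℝ (Fin m))
    (P2' : Euc n → Euc n) (U : Set (Euc n)) (hU : U ∈ 𝓝 x)
    (hP2' : ∀ z ∈ U, HasGradientAt P2 (P2' z) z) (hP2'cont : ContinuousOn P2' U)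
    (lam : EuclideanSpace ℝ (Fin m)) (hlam : ∀ i, 0 ≤ lam i)
    (hGle : ∀ i, barG g g' x y w i ≤ 0)
    (hcompl : ∀ i, lam i * barG g g' x y w i = 0)
    (u : Euc n) (hu : u ∈ ConvexSubdiff P1 x) :
    (WithLp.toLp 2 (f' x - P2' x + u + ∑ i, lam i • (g' i y + w i • (x - y)),
      WithLp.toLp 2 (∑ i, lam i • (g'' i y (x - y) - w i • (x - y)),
      (2⁻¹ * ‖x - y‖ ^ 2) • lam)) : PS n m)
      ∈ LimSubdiff (barF f P1 P2 g g') (WithLp.toLp 2 (x, WithLp.toLp 2 (y, w))) :=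
  stmt7_general f P1 P2 f' g g' g'' hf' hg' hg'' x y w P2' U hU hP2' lam hlam hGle hcompl u hu
end
end

section
/- Let f: ℝⁿ → (−∞, +∞] be a proper closed convex level-bounded function with Λ := Argmin f ≠ ∅, and set f̲ := inf f. Suppose f satisfies the KL property with exponent α ∈ [0,1) at every point of Λ. Then there exist ε > 0, r₀ > 0 and c₀ > 0 such that dist(x, Λ) ≤ c₀ (f(x) − f̲)^{1−α} for every x ∈ dom ∂f satisfying dist(x, Λ) ≤ ε and f̲ ≤ f(x) < f̲ + r₀. -/
open Set Filter Topology Metric Bornology RealInnerProductSpace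
open scoped Classical

noncomputable section

/-- Convex subdifferential of an extended-real-valued function. -/
def ESubdiff {H : Type*} [NormedAddCommGroup H] [InnerProductSpace ℝ H]
    (f : H → EReal) (x : H) : Set H :=
  {ζ | f x ≠ ⊤ ∧ f x ≠ ⊥ ∧ ∀ y, f x + ((⟪ζ, y - x⟫ : ℝ) : EReal) ≤ f y}


/-!
Compactness of the set `Λ` of minimizers turns the pointwise KL inequalities into one with uniform
constants `A`, `r` on a neighbourhood of `Λ`, and level-boundedness puts a whole sublevel strip
`{f < min f + r}` inside that neighbourhood. Starting from `x` in the strip with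
`s = f x - min f > 0`, run the proximal point method with step `λ = s ^ (1 - 2α)`. Each step
yields the subgradient `(x_k - x_{k+1}) / λ ∈ ∂f(x_{k+1})`, so the KL inequality and the concavity
of `t ↦ t ^ (1 - α)` give the finite-length estimate
`∑ ‖x_{k+1} - x_k‖ ≤ 2 ‖x_1 - x_0‖ + 2 A (f x_1 - min f) ^ (1 - α) = O(s ^ (1 - α))`,
while `f x_k → min f` forces `dist (x_k, Λ) → 0`.
-/

lemma Real.mul_rpow_sub_one_mul_sub_le_rpow_sub_rpow {p a b : ℝ} (hp0 : 0 ≤ p) (hp1 : p ≤ 1)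
    (hb : 0 ≤ b) (ha : 0 < a) : p * a ^ (p - 1) * (a - b) ≤ a ^ p - b ^ p := by
  have hbern := rpow_one_add_le_one_add_mul_self
    (by linarith [div_nonneg hb ha.le] : -1 ≤ b / a - 1) hp0 hp1
  rw [add_sub_cancel, Real.div_rpow hb ha.le, div_le_iff₀ (by positivity)] at hbern
  have hpow : a ^ (p - 1) * a = a ^ p := by rw [Real.rpow_sub_one ha.ne', div_mul_cancel₀ _ ha.ne']
  calc p * a ^ (p - 1) * (a - b) = p * (a ^ (p - 1) * a) * (1 - b / a) := by field_simp
    _ ≤ a ^ p - b ^ p := by rw [hpow]; nlinarith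

lemma sum_range_le_of_le_half_add_sub {Δ u : ℕ → ℝ} (hΔ : ∀ k, 0 ≤ Δ k) (hu : ∀ k, 0 ≤ u k)
    (h : ∀ k, Δ (k + 1) ≤ Δ k / 2 + (u k - u (k + 1))) (N : ℕ) :
    ∑ k ∈ Finset.range N, Δ k ≤ 2 * Δ 0 + 2 * u 0 := by
  cases N with
  | zero => simp only [Finset.sum_range_zero]; linarith [hΔ 0, hu 0]
  | succ N =>
    have hsum := Finset.sum_le_sum fun k (_ : k ∈ Finset.range N) => h k
    rw [Finset.sum_add_distrib, ← Finset.sum_div, Finset.sum_range_sub'] at hsum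
    linarith [Finset.sum_range_succ Δ N, Finset.sum_range_succ' Δ N, hΔ N, hu N]

section KLSequence

variable {α lam A : ℝ} {σ Δ : ℕ → ℝ}

lemma le_half_add_sub_of_KL (hα0 : 0 ≤ α) (hα1 : α < 1) (hlam : 0 < lam) (hA : 0 ≤ A)
    (hσ : ∀ k, 0 ≤ σ k) (hΔ : ∀ k, 0 ≤ Δ k)
    (hdec : ∀ k, σ (k + 1) + Δ k ^ 2 / (2 * lam) ≤ σ k)
    (hKL : ∀ k, 0 < σ (k + 1) → lam ≤ A * (1 - α) * σ (k + 1) ^ (-α) * Δ k) (k : ℕ) :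
    Δ (k + 1) ≤ Δ k / 2 + (A * σ (k + 1) ^ (1 - α) - A * σ (k + 2) ^ (1 - α)) := by
  have hdec' : σ (k + 2) + Δ (k + 1) ^ 2 / (2 * lam) ≤ σ (k + 1) := hdec (k + 1)
  have hsq : Δ (k + 1) ^ 2 ≤ 2 * lam * (σ (k + 1) - σ (k + 2)) := by
    rw [← div_le_iff₀' (by positivity : 0 < 2 * lam)]
    linarith
  have hσ21 : σ (k + 2) ≤ σ (k + 1) := by
    linarith [(by positivity : 0 ≤ Δ (k + 1) ^ 2 / (2 * lam))]
  have hmono : σ (k + 2) ^ (1 - α) ≤ σ (k + 1) ^ (1 - α) :=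
    Real.rpow_le_rpow (hσ _) hσ21 (by linarith)
  rcases (hσ (k + 1)).eq_or_lt with hzero | hpos
  · have : Δ (k + 1) = 0 := by nlinarith [hσ (k + 2)]
    nlinarith [hΔ k]
  have htangent := Real.mul_rpow_sub_one_mul_sub_le_rpow_sub_rpow (by linarith : 0 ≤ 1 - α)
    (by linarith : 1 - α ≤ 1) (hσ (k + 2)) hpos
  rw [sub_sub_cancel_left] at htangent
  have hsq' : Δ (k + 1) ^ 2 ≤ 2 * Δ k * (A * σ (k + 1) ^ (1 - α) - A * σ (k + 2) ^ (1 - α)) :=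
    calc Δ (k + 1) ^ 2 ≤ 2 * lam * (σ (k + 1) - σ (k + 2)) := hsq
      _ ≤ 2 * (A * (1 - α) * σ (k + 1) ^ (-α) * Δ k) * (σ (k + 1) - σ (k + 2)) := by
          gcongr
          exact hKL k hpos
      _ ≤ 2 * Δ k * (A * σ (k + 1) ^ (1 - α) - A * σ (k + 2) ^ (1 - α)) := by
          have := mul_le_mul_of_nonneg_left htangent (mul_nonneg hA (hΔ k))
          nlinarith
  -- AM-GM: `Δ (k + 1) ^ 2 ≤ 2 Δ k u` gives `Δ (k + 1) ≤ Δ k / 2 + u`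
  nlinarith [sq_nonneg (Δ k / 2 - (A * σ (k + 1) ^ (1 - α) - A * σ (k + 2) ^ (1 - α))),
    hΔ (k + 1), hΔ k, mul_le_mul_of_nonneg_left hmono hA]

lemma sum_range_le_of_KL (hα0 : 0 ≤ α) (hα1 : α < 1) (hlam : 0 < lam) (hA : 0 ≤ A)
    (hσ : ∀ k, 0 ≤ σ k) (hΔ : ∀ k, 0 ≤ Δ k)
    (hdec : ∀ k, σ (k + 1) + Δ k ^ 2 / (2 * lam) ≤ σ k)
    (hKL : ∀ k, 0 < σ (k + 1) → lam ≤ A * (1 - α) * σ (k + 1) ^ (-α) * Δ k) (N : ℕ) :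
    ∑ k ∈ Finset.range N, Δ k ≤ 2 * Δ 0 + 2 * (A * σ 1 ^ (1 - α)) :=
  sum_range_le_of_le_half_add_sub hΔ (fun k => mul_nonneg hA (Real.rpow_nonneg (hσ (k + 1)) _))
    (le_half_add_sub_of_KL hα0 hα1 hlam hA hσ hΔ hdec hKL) N

lemma tendsto_zero_of_KL (hα0 : 0 ≤ α) (hα1 : α < 1) (hlam : 0 < lam) (hA : 0 ≤ A)
    (hσ : ∀ k, 0 ≤ σ k) (hanti : Antitone σ) (hΔ : ∀ k, 0 ≤ Δ k)
    (hΔ0 : Tendsto Δ atTop (𝓝 0))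
    (hKL : ∀ k, 0 < σ (k + 1) → lam ≤ A * (1 - α) * σ (k + 1) ^ (-α) * Δ k) :
    Tendsto σ atTop (𝓝 0) := by
  have hlim := tendsto_atTop_ciInf hanti ⟨0, Set.forall_mem_range.2 hσ⟩
  suffices ⨅ k, σ k ≤ 0 by
    rwa [le_antisymm this (le_ciInf hσ)] at hlim
  by_contra! hL
  set L := ⨅ k, σ k
  have hbound : ∀ k, lam ≤ A * (1 - α) * L ^ (-α) * Δ k := fun k =>
    have hLσ : L ≤ σ (k + 1) := ciInf_le ⟨0, Set.forall_mem_range.2 hσ⟩ _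
    (hKL k (hL.trans_le hLσ)).trans <| mul_le_mul_of_nonneg_right
      (mul_le_mul_of_nonneg_left (Real.rpow_le_rpow_of_nonpos hL hLσ (by linarith))
        (mul_nonneg hA (by linarith))) (hΔ k)
  have : lam ≤ 0 := by
    simpa using ge_of_tendsto (hΔ0.const_mul (A * (1 - α) * L ^ (-α))) (Eventually.of_forall hbound)
  linarith

end KLSequence

section Sublevel

variable {X : Type*} [MetricSpace X] [ProperSpace X] {f : X → EReal} {m : ℝ}

lemma exists_sublevel_subset_of_mem_nhdsSet (hlsc : LowerSemicontinuous f)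
    (hlevel : ∀ σ : ℝ, IsBounded {x | f x ≤ ((σ : ℝ) : EReal)}) {U : Set X}
    (hU : U ∈ 𝓝ˢ {x | f x ≤ m}) : ∃ r > 0, ∀ x, f x < ((m + r : ℝ) : EReal) → x ∈ U := by
  by_contra! h
  set K := {x | f x ≤ ((m + 1 : ℝ) : EReal)} ∩ (interior U)ᶜ
  have hK : IsCompact K := isCompact_of_isClosed_isBounded
    ((hlsc.isClosed_preimage _).inter isOpen_interior.isClosed_compl)
    ((hlevel _).subset inter_subset_left)
  obtain ⟨x₁, hx₁, hx₁U⟩ := h 1 one_pos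
  obtain ⟨z, ⟨hzK, hzU⟩, hmin⟩ := LowerSemicontinuousOn.exists_isMinOn (s := K)
    ⟨x₁, hx₁.le, fun hx => hx₁U (interior_subset hx)⟩ hK (hlsc.lowerSemicontinuousOn K)
  have hmz : (m : EReal) < f z := by
    by_contra! hzm
    exact hzU (subset_interior_iff_mem_nhdsSet.2 hU hzm)
  have hfz : f z = (((f z).toReal : ℝ) : EReal) := (EReal.coe_toReal (hzK.trans_lt
    (EReal.coe_lt_top _)).ne hmz.ne_bot).symm
  obtain ⟨x, hx, hxU⟩ := h ((f z).toReal - m) (by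
    rw [hfz, EReal.coe_lt_coe_iff] at hmz
    linarith)
  rw [add_sub_cancel, ← hfz] at hx
  exact (hmin ⟨(hx.trans_le hzK).le, fun hxi => hxU (interior_subset hxi)⟩).not_gt hx

lemma tendsto_infDist_sublevel (hlsc : LowerSemicontinuous f)
    (hlevel : ∀ σ : ℝ, IsBounded {x | f x ≤ ((σ : ℝ) : EReal)}) {ι : Type*} {l : Filter ι}
    {u : ι → X} (hu : Tendsto (f ∘ u) l (𝓝 (m : EReal))) :
    Tendsto (fun i => infDist (u i) {x | f x ≤ m}) l (𝓝 0) := by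
  refine Metric.tendsto_nhds.2 fun ε hε => ?_
  obtain ⟨r, hr, hsub⟩ := exists_sublevel_subset_of_mem_nhdsSet hlsc hlevel
    (thickening_mem_nhdsSet {x | f x ≤ m} hε)
  filter_upwards [hu.eventually (gt_mem_nhds (EReal.coe_lt_coe_iff.2 (lt_add_of_pos_right m hr)))]
    with i hi
  obtain ⟨y, hy, hdist⟩ := mem_thickening_iff.1 (hsub (u i) hi)
  rw [Real.dist_0_eq_abs, abs_of_nonneg infDist_nonneg]
  exact (infDist_le_dist_of_mem hy).trans_lt hdist

end Sublevel

section Prox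

variable {H : Type*} [NormedAddCommGroup H] {f : H → EReal} {lam : ℝ} {z u : H}

def IsProxPoint (f : H → EReal) (lam : ℝ) (z u : H) : Prop :=
  ∀ y, f u + ((‖u - z‖ ^ 2 / (2 * lam) : ℝ) : EReal) ≤ f y + ((‖y - z‖ ^ 2 / (2 * lam) : ℝ) : EReal)

lemma exists_isProxPoint [ProperSpace H] (hnotbot : ∀ x, f x ≠ ⊥) (hlsc : LowerSemicontinuous f)
    (hlevel : ∀ σ : ℝ, IsBounded {x | f x ≤ ((σ : ℝ) : EReal)}) (hlam : 0 ≤ lam)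
    (hz : f z ≠ ⊤) : ∃ u, IsProxPoint f lam z u := by
  set g : H → EReal := fun y => f y + ((‖y - z‖ ^ 2 / (2 * lam) : ℝ) : EReal)
  have hg : LowerSemicontinuous g :=
    hlsc.add' (continuous_coe_real_ereal.comp (by fun_prop)).lowerSemicontinuous
      fun x => EReal.continuousAt_add (Or.inr (EReal.coe_ne_bot _)) (Or.inl (hnotbot x))
  have hK : IsCompact {y | f y ≤ f z} := by
    refine isCompact_of_isClosed_isBounded (hlsc.isClosed_preimage (f z))
      ((hlevel (f z).toReal).subset fun y hy => ?_)
    rwa [EReal.coe_toReal hz (hnotbot z)]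
  obtain ⟨u, -, hu⟩ := LowerSemicontinuousOn.exists_isMinOn (s := {y | f y ≤ f z})
    ⟨z, le_refl (f z)⟩ hK (hg.lowerSemicontinuousOn _)
  refine ⟨u, fun y => ?_⟩
  by_cases hy : f y ≤ f z
  · exact hu hy
  · calc g u ≤ g z := hu (le_rfl : f z ≤ f z)
      _ = f z := by simp [g]
      _ ≤ f y := (not_le.1 hy).le
      _ ≤ g y := le_add_of_nonneg_right (EReal.coe_nonneg.2 (by positivity))

namespace IsProxPoint

lemma add_le (hu : IsProxPoint f lam z u) :
    f u + ((‖u - z‖ ^ 2 / (2 * lam) : ℝ) : EReal) ≤ f z := by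
  simpa using hu z

lemma ne_top (hu : IsProxPoint f lam z u) (hz : f z ≠ ⊤) : f u ≠ ⊤ := fun h =>
  hz (top_le_iff.1 (by simpa [h] using hu.add_le))

lemma toReal_add_le (hnotbot : ∀ x, f x ≠ ⊥) (hu : IsProxPoint f lam z u) (hz : f z ≠ ⊤) :
    (f u).toReal + ‖u - z‖ ^ 2 / (2 * lam) ≤ (f z).toReal := by
  have h := hu.add_le
  rwa [← EReal.coe_toReal (hu.ne_top hz) (hnotbot u), ← EReal.coe_toReal hz (hnotbot z),
    ← EReal.coe_add, EReal.coe_le_coe_iff] at h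

lemma smul_sub_mem_eSubdiff [InnerProductSpace ℝ H] (hnotbot : ∀ x, f x ≠ ⊥)
    (hconv : ∀ x y : H, ∀ t : ℝ, 0 ≤ t → t ≤ 1 →
      f (t • x + (1 - t) • y) ≤ ((t : ℝ) : EReal) * f x + ((1 - t : ℝ) : EReal) * f y)
    (hlam : 0 < lam) (hu : IsProxPoint f lam z u) (hz : f z ≠ ⊤) :
    lam⁻¹ • (z - u) ∈ ESubdiff f u := by
  have hut := hu.ne_top hz
  refine ⟨hut, hnotbot u, fun y => ?_⟩
  by_cases hyt : f y = ⊤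
  · simp [hyt]
  set a := (f u).toReal
  set b := (f y).toReal
  set I := ⟪u - z, y - u⟫
  have hfu : f u = a := (EReal.coe_toReal hut (hnotbot u)).symm
  have hfy : f y = b := (EReal.coe_toReal hyt (hnotbot y)).symm
  -- minimality of `u` against `u + t • (y - u)`, with convexity: the subgradient inequality
  -- up to an error `O(t)`
  have hsegment : ∀ t ∈ Ioc (0 : ℝ) 1, a - b - I / lam ≤ t * (‖y - u‖ ^ 2 / (2 * lam)) := by
    rintro t ⟨ht0, ht1⟩
    have hcv := hconv y u t ht0.le ht1
    rw [show t • y + (1 - t) • u = u + t • (y - u) by module, hfy, hfu, ← EReal.coe_mul,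
      ← EReal.coe_mul, ← EReal.coe_add] at hcv
    have hprox := (hu (u + t • (y - u))).trans (add_le_add_left hcv _)
    rw [hfu, ← EReal.coe_add, ← EReal.coe_add, EReal.coe_le_coe_iff,
      show u + t • (y - u) - z = (u - z) + t • (y - u) by abel, norm_add_sq_real,
      real_inner_smul_right, norm_smul, mul_pow, Real.norm_eq_abs, sq_abs] at hprox
    have hsplit : (‖u - z‖ ^ 2 + 2 * (t * I) + t ^ 2 * ‖y - u‖ ^ 2) / (2 * lam)
        = ‖u - z‖ ^ 2 / (2 * lam) + t * (I / lam) + t * (t * (‖y - u‖ ^ 2 / (2 * lam))) := by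
      field_simp
    rw [hsplit] at hprox
    refine le_of_mul_le_mul_left ?_ ht0
    linarith
  have hlim : a - b - I / lam ≤ 0 :=
    ge_of_tendsto (((continuous_mul_const _).tendsto' 0 0 (zero_mul _)).mono_left
      nhdsWithin_le_nhds) (eventually_of_mem (Ioc_mem_nhdsGT one_pos) hsegment)
  rw [hfu, hfy, ← EReal.coe_add, EReal.coe_le_coe_iff, real_inner_smul_left, ← neg_sub u z,
    inner_neg_left]
  have : lam⁻¹ * -I = -(I / lam) := by ring
  linarith

lemma infDist_zero_eSubdiff_le [InnerProductSpace ℝ H] (hnotbot : ∀ x, f x ≠ ⊥)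
    (hconv : ∀ x y : H, ∀ t : ℝ, 0 ≤ t → t ≤ 1 →
      f (t • x + (1 - t) • y) ≤ ((t : ℝ) : EReal) * f x + ((1 - t : ℝ) : EReal) * f y)
    (hlam : 0 < lam) (hu : IsProxPoint f lam z u) (hz : f z ≠ ⊤) :
    infDist 0 (ESubdiff f u) ≤ dist z u / lam :=
  (infDist_le_dist_of_mem (hu.smul_sub_mem_eSubdiff hnotbot hconv hlam hz)).trans_eq <| by
    rw [dist_zero_left, norm_smul, Real.norm_eq_abs, abs_inv, abs_of_pos hlam, dist_eq_norm,
      inv_mul_eq_div]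

end IsProxPoint

lemma exists_seq_isProxPoint [ProperSpace H] (hnotbot : ∀ x, f x ≠ ⊥)
    (hlsc : LowerSemicontinuous f)
    (hlevel : ∀ σ : ℝ, IsBounded {x | f x ≤ ((σ : ℝ) : EReal)}) (hlam : 0 ≤ lam)
    {x : H} (hx : f x ≠ ⊤) : ∃ X : ℕ → H, X 0 = x ∧ ∀ k, IsProxPoint f lam (X k) (X (k + 1)) := by
  have : ∀ z : {z : H // f z ≠ ⊤}, ∃ u : {z : H // f z ≠ ⊤}, IsProxPoint f lam z u := fun z =>
    let ⟨u, hu⟩ := exists_isProxPoint hnotbot hlsc hlevel hlam z.2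
    ⟨⟨u, hu.ne_top z.2⟩, hu⟩
  choose P hP using this
  exact ⟨fun k => P^[k] ⟨x, hx⟩, rfl, fun k => by
    simpa only [Function.iterate_succ_apply'] using hP _⟩

end Prox

section KL

variable {H : Type*} [NormedAddCommGroup H] [InnerProductSpace ℝ H] {f : H → EReal}
  {α m A r : ℝ} {x : H}

def KLIneqAt (f : H → EReal) (α m A r : ℝ) (x : H) : Prop :=
  (m : EReal) < f x → f x < ((m + r : ℝ) : EReal) →
    1 ≤ A * (1 - α) * ((f x).toReal - m) ^ (-α) * infDist 0 (ESubdiff f x)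

lemma KLIneqAt.mono (hα : α ≤ 1) {A' r' : ℝ} (hA : A ≤ A') (hr : r' ≤ r)
    (h : KLIneqAt f α m A r x) : KLIneqAt f α m A' r' x := fun h₁ h₂ => by
  have hm : m ≤ (f x).toReal := by
    simpa using EReal.toReal_le_toReal h₁.le (EReal.coe_ne_bot m) h₂.ne_top
  refine (h h₁ (h₂.trans_le (EReal.coe_le_coe_iff.2 (by linarith)))).trans ?_
  gcongr
  exact infDist_nonneg

lemma IsCompact.exists_eventually_KLIneqAt {S : Set H} (hS : IsCompact S) (hα : α ≤ 1)
    (h : ∀ p ∈ S, ∃ A, 0 ≤ A ∧ ∃ r, 0 < r ∧ ∀ᶠ x in 𝓝 p, KLIneqAt f α m A r x) :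
    ∃ A, 0 ≤ A ∧ ∃ r, 0 < r ∧ ∀ᶠ x in 𝓝ˢ S, KLIneqAt f α m A r x := by
  refine hS.induction_on ⟨0, le_rfl, 1, one_pos, by simp⟩ ?_ ?_ ?_
  · rintro s t hst ⟨A, hA, r, hr, ht⟩
    exact ⟨A, hA, r, hr, ht.filter_mono (nhdsSet_mono hst)⟩
  · rintro s t ⟨A, hA, r, hr, hs⟩ ⟨A', -, r', hr', ht⟩
    refine ⟨max A A', hA.trans (le_max_left _ _), min r r', lt_min hr hr', ?_⟩
    rw [nhdsSet_union, eventually_sup]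
    exact ⟨hs.mono fun x hx => hx.mono hα (le_max_left _ _) (min_le_left _ _),
      ht.mono fun x hx => hx.mono hα (le_max_right _ _) (min_le_right _ _)⟩
  · intro p hp
    obtain ⟨A, hA, r, hr, hp⟩ := h p hp
    exact ⟨interior {x | KLIneqAt f α m A r x}, mem_nhdsWithin_of_mem_nhds (interior_mem_nhds.2 hp),
      A, hA, r, hr, mem_of_superset (isOpen_interior.mem_nhdsSet.2 subset_rfl) interior_subset⟩

lemma IsProxPoint.le_of_KLIneqAt {lam : ℝ} {z u : H} (hnotbot : ∀ x, f x ≠ ⊥)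
    (hconv : ∀ x y : H, ∀ t : ℝ, 0 ≤ t → t ≤ 1 →
      f (t • x + (1 - t) • y) ≤ ((t : ℝ) : EReal) * f x + ((1 - t : ℝ) : EReal) * f y)
    (hlam : 0 < lam) (hu : IsProxPoint f lam z u) (hz : f z ≠ ⊤) (hKL : KLIneqAt f α m A r u)
    (h₁ : (m : EReal) < f u) (h₂ : f u < ((m + r : ℝ) : EReal)) :
    lam ≤ A * (1 - α) * ((f u).toReal - m) ^ (-α) * dist z u := by
  have hKLu := hKL h₁ h₂
  have hc : 0 ≤ A * (1 - α) * ((f u).toReal - m) ^ (-α) := by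
    by_contra! hneg
    nlinarith [infDist_nonneg (x := (0 : H)) (s := ESubdiff f u)]
  have := hKLu.trans (mul_le_mul_of_nonneg_left
    (hu.infDist_zero_eSubdiff_le hnotbot hconv hlam hz) hc)
  rwa [mul_div_assoc', le_div_iff₀ hlam, one_mul] at this

end KL

section ErrorBound

variable {H : Type*} [NormedAddCommGroup H] [InnerProductSpace ℝ H] [ProperSpace H]
  {f : H → EReal} {α m A r lam : ℝ}

lemma infDist_sublevel_le_of_isProxPoint (hα0 : 0 ≤ α) (hα1 : α < 1)
    (hnotbot : ∀ x, f x ≠ ⊥) (hlsc : LowerSemicontinuous f)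
    (hconv : ∀ x y : H, ∀ t : ℝ, 0 ≤ t → t ≤ 1 →
      f (t • x + (1 - t) • y) ≤ ((t : ℝ) : EReal) * f x + ((1 - t : ℝ) : EReal) * f y)
    (hlevel : ∀ σ : ℝ, IsBounded {x | f x ≤ ((σ : ℝ) : EReal)})
    (hmin : ∀ y, (m : EReal) ≤ f y) (hA : 0 ≤ A) (hKL : ∀ y, KLIneqAt f α m A r y)
    (hlam : 0 < lam) {X : ℕ → H} (hX : ∀ k, IsProxPoint f lam (X k) (X (k + 1)))
    (hX0 : f (X 0) < ((m + r : ℝ) : EReal)) :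
    infDist (X 0) {y | f y ≤ m}
      ≤ 2 * dist (X 0) (X 1) + 2 * (A * ((f (X 1)).toReal - m) ^ (1 - α)) := by
  have htop : ∀ k, f (X k) ≠ ⊤ := fun k => Nat.rec hX0.ne_top (fun k ih => (hX k).ne_top ih) k
  set σ : ℕ → ℝ := fun k => (f (X k)).toReal - m
  set Δ : ℕ → ℝ := fun k => dist (X k) (X (k + 1))
  have hfX : ∀ k, f (X k) = ((m + σ k : ℝ) : EReal) := fun k => by
    rw [add_sub_cancel, EReal.coe_toReal (htop k) (hnotbot _)]
  have hσ : ∀ k, 0 ≤ σ k := fun k => by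
    have := hmin (X k)
    rwa [hfX, EReal.coe_le_coe_iff, le_add_iff_nonneg_right] at this
  have hΔ : ∀ k, 0 ≤ Δ k := fun k => dist_nonneg
  have hdec : ∀ k, σ (k + 1) + Δ k ^ 2 / (2 * lam) ≤ σ k := fun k => by
    have := (hX k).toReal_add_le hnotbot (htop k)
    simp only [σ, Δ, dist_eq_norm, norm_sub_rev (X k)]
    linarith
  have hanti : Antitone σ := antitone_nat_of_succ_le fun k => by
    linarith [hdec k, (by positivity : 0 ≤ Δ k ^ 2 / (2 * lam))]
  have hσr : ∀ k, σ k < r := fun k => by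
    rw [hfX, EReal.coe_lt_coe_iff] at hX0
    linarith [hanti (Nat.zero_le k)]
  have hKLσ : ∀ k, 0 < σ (k + 1) → lam ≤ A * (1 - α) * σ (k + 1) ^ (-α) * Δ k := fun k hk =>
    (hX k).le_of_KLIneqAt hnotbot hconv hlam (htop k) (hKL _)
      (by rw [hfX]; exact EReal.coe_lt_coe_iff.2 (by linarith))
      (by rw [hfX]; exact EReal.coe_lt_coe_iff.2 (by linarith [hσr (k + 1)]))
  have hsum := sum_range_le_of_KL hα0 hα1 hlam hA hσ hΔ hdec hKLσ
  have hσ0 : Tendsto σ atTop (𝓝 0) := tendsto_zero_of_KL hα0 hα1 hlam hA hσ hanti hΔ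
    (summable_of_sum_range_le hΔ hsum).tendsto_atTop_zero hKLσ
  have hinfDist : Tendsto (fun k => infDist (X k) {y | f y ≤ m}) atTop (𝓝 0) := by
    refine tendsto_infDist_sublevel hlsc hlevel ?_
    have := (continuous_coe_real_ereal.tendsto _).comp (hσ0.const_add m)
    rw [add_zero] at this
    exact this.congr fun k => (hfX k).symm
  refine ge_of_tendsto' (by simpa using hinfDist.add_const (2 * Δ 0 + 2 * (A * σ 1 ^ (1 - α))))
    fun N => ?_
  calc infDist (X 0) {y | f y ≤ m} ≤ infDist (X N) {y | f y ≤ m} + dist (X 0) (X N) :=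
        infDist_le_infDist_add_dist
    _ ≤ _ := add_le_add_right ((dist_le_range_sum_dist X N).trans (hsum N)) _

theorem infDist_sublevel_le_of_forall_KLIneqAt (hα0 : 0 ≤ α) (hα1 : α < 1)
    (hnotbot : ∀ x, f x ≠ ⊥) (hlsc : LowerSemicontinuous f)
    (hconv : ∀ x y : H, ∀ t : ℝ, 0 ≤ t → t ≤ 1 →
      f (t • x + (1 - t) • y) ≤ ((t : ℝ) : EReal) * f x + ((1 - t : ℝ) : EReal) * f y)
    (hlevel : ∀ σ : ℝ, IsBounded {x | f x ≤ ((σ : ℝ) : EReal)})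
    (hmin : ∀ y, (m : EReal) ≤ f y) (hA : 0 ≤ A) (hKL : ∀ y, KLIneqAt f α m A r y)
    {x : H} (hx : f x < ((m + r : ℝ) : EReal)) :
    infDist x {y | f y ≤ m} ≤ (2 * √2 + 2 * A) * ((f x).toReal - m) ^ (1 - α) := by
  have hle : ∀ y, f y ≠ ⊤ → m ≤ (f y).toReal := fun y hy => by
    simpa using EReal.toReal_le_toReal (hmin y) (EReal.coe_ne_bot m) hy
  set s := (f x).toReal - m
  rcases (sub_nonneg.2 (hle x hx.ne_top)).eq_or_lt with hs | hs
  · rw [infDist_zero_of_mem]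
    · positivity
    · change f x ≤ m
      rw [← EReal.coe_toReal hx.ne_top (hnotbot x), EReal.coe_le_coe_iff]
      linarith
  -- the step size `s ^ (1 - 2α)` makes the first prox step of length `O(s ^ (1 - α))`
  have hlam : 0 < s ^ (1 - 2 * α) := Real.rpow_pos_of_pos hs _
  obtain ⟨X, rfl, hX⟩ := exists_seq_isProxPoint hnotbot hlsc hlevel hlam.le hx.ne_top
  have hstep := (hX 0).toReal_add_le hnotbot hx.ne_top
  have hσ1 := hle (X 1) ((hX 0).ne_top hx.ne_top)
  have hdist : dist (X 0) (X 1) ≤ √2 * s ^ (1 - α) := by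
    have hpow : (s ^ (1 - α)) ^ 2 = s ^ (1 - 2 * α) * s := by
      rw [← Real.rpow_natCast, ← Real.rpow_mul hs.le, ← Real.rpow_add_one hs.ne']
      congr 1
      push_cast
      ring
    rw [← pow_le_pow_iff_left₀ dist_nonneg (by positivity) two_ne_zero, mul_pow,
      Real.sq_sqrt zero_le_two, hpow, dist_eq_norm, norm_sub_rev]
    have : ‖X 1 - X 0‖ ^ 2 / (2 * s ^ (1 - 2 * α)) ≤ s := by linarith
    rw [div_le_iff₀ (by positivity)] at this
    linarith
  refine (infDist_sublevel_le_of_isProxPoint hα0 hα1 hnotbot hlsc hconv hlevel hmin hA hKL hlam hX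
    hx).trans ?_
  have hσ1s : (f (X 1)).toReal - m ≤ s := by
    linarith [(by positivity : 0 ≤ ‖X 1 - X 0‖ ^ 2 / (2 * s ^ (1 - 2 * α)))]
  have hσ1pow := Real.rpow_le_rpow (by linarith) hσ1s (by linarith : 0 ≤ 1 - α)
  linarith [mul_le_mul_of_nonneg_left hσ1pow hA]

end ErrorBound

/-- uniformized KL error bound for a proper closed convex
level-bounded function satisfying the KL property with exponent `α` on its
(nonempty) set of minimizers. -/
theorem stmt10 {n : ℕ} (f : Euc n → EReal) (α : ℝ) (hα0 : 0 ≤ α) (hα1 : α < 1)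
    (hproper : ∃ x, f x ≠ ⊤) (hnotbot : ∀ x, f x ≠ ⊥)
    (hlsc : LowerSemicontinuous f)
    (hconv : ∀ x y : Euc n, ∀ t : ℝ, 0 ≤ t → t ≤ 1 →
      f (t • x + (1 - t) • y) ≤ ((t : ℝ) : EReal) * f x + ((1 - t : ℝ) : EReal) * f y)
    (hlevel : ∀ σ : ℝ, IsBounded {x | f x ≤ ((σ : ℝ) : EReal)})
    (x₀ : Euc n) (hx₀ : ∀ y, f x₀ ≤ f y)
    (hKL : ∀ xhat ∈ {x : Euc n | ∀ y, f x ≤ f y},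
      ∃ a₀ : ℝ, 0 < a₀ ∧ ∃ a : ℝ, 0 < a ∧ ∃ V ∈ 𝓝 xhat, ∀ x ∈ V,
        f xhat < f x → f x < f xhat + ((a : ℝ) : EReal) →
        1 ≤ a₀ * (1 - α) * ((f x).toReal - (f xhat).toReal) ^ (-α) *
          infDist 0 (ESubdiff f x)) :
    ∃ ε : ℝ, 0 < ε ∧ ∃ r₀ : ℝ, 0 < r₀ ∧ ∃ c₀ : ℝ, 0 < c₀ ∧
      ∀ x : Euc n, (ESubdiff f x).Nonempty →
        infDist x {y : Euc n | ∀ z, f y ≤ f z} ≤ ε →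
        f x < f x₀ + ((r₀ : ℝ) : EReal) →
        infDist x {y : Euc n | ∀ z, f y ≤ f z}
          ≤ c₀ * ((f x).toReal - (f x₀).toReal) ^ (1 - α) := by
  obtain ⟨w, hw⟩ := hproper
  set m := (f x₀).toReal
  have hfx₀ : f x₀ = m :=
    (EReal.coe_toReal (fun h => hw (top_le_iff.1 (h ▸ hx₀ w))) (hnotbot x₀)).symm
  have hargmin : {y | ∀ z, f y ≤ f z} = {y | f y ≤ m} := by
    ext y
    exact ⟨fun h => hfx₀ ▸ h x₀, fun h z => h.trans (hfx₀ ▸ hx₀ z)⟩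
  have hKLm : ∀ p ∈ {y | f y ≤ m}, ∃ A, 0 ≤ A ∧ ∃ r, 0 < r ∧ ∀ᶠ x in 𝓝 p, KLIneqAt f α m A r x := by
    intro p hp
    have hfp : f p = m := le_antisymm hp (hfx₀ ▸ hx₀ p)
    obtain ⟨a₀, ha₀, a, ha, V, hV, hKLp⟩ := hKL p (hargmin ▸ hp)
    refine ⟨a₀, ha₀.le, a, ha, mem_of_superset hV fun x hx h₁ h₂ => ?_⟩
    simpa [hfp] using hKLp x hx (hfp ▸ h₁) (by rwa [hfp, ← EReal.coe_add])
  obtain ⟨A, hA, r, hr, hev⟩ := (isCompact_of_isClosed_isBounded (hlsc.isClosed_preimage _)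
    (hlevel m)).exists_eventually_KLIneqAt hα1.le hKLm
  obtain ⟨r', hr', hsub⟩ := exists_sublevel_subset_of_mem_nhdsSet hlsc hlevel hev
  refine ⟨1, one_pos, min r r', lt_min hr hr', 2 * √2 + 2 * A, by positivity, fun x _ _ hx => ?_⟩
  rw [hargmin]
  refine infDist_sublevel_le_of_forall_KLIneqAt hα0 hα1 hnotbot hlsc hconv hlevel
    (fun y => hfx₀ ▸ hx₀ y) hA (fun y h₁ h₂ => ?_) (by rwa [hfx₀, ← EReal.coe_add] at hx)
  exact (hsub y (h₂.trans_le (EReal.coe_le_coe_iff.2 (by simp)))).mono hα1.le le_rfl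
    (min_le_left _ _) h₁ h₂
end
end
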